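/- arXiv:2011.14149 — 10 statements merged into one kernel-verified Lean document; each statement's English description precedes it below -/
import Mathlib

section
/- Let p ≥ 2 and 1 ≤ m ≤ 2p − 1 be integers. There exists an m-dimensional real linear subspace W of ℂ^p (viewed as a 2p-dimensional real vector space) such that for every diagonal unitary matrix U ∈ Mₚ(ℂ) (a diagonal matrix all of whose diagonal entries have modulus 1), if U·W = W (setwise image of W under the linear map U) then U = 1 or U = −1. (This is the existence form of the statement that a generic m-dimensional real subspace of ℂ^p is not invariant under any nontrivial diagonal unitary ≠ ±1.) -/
/-!
Split `ℂ^ι` into real and imaginary parts and take `W = A + i B`, where `B` is a coordinate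
subspace and `A` consists of the real vectors whose coordinates off a proper nonempty set `s` all
equal the mean of the coordinates on `s`. If `diag u` preserves `W`, then `u = u * 1 ∈ W` puts
`Im u` in `B`, and for each coordinate `k` of `B`, `u * (i e_k) ∈ W` puts `-(Im u_k) e_k` in `A`,
which forces `Im u_k = 0`. So `u` is a vector of signs lying in `A`; its coordinate off `s` is
both `±1` and the mean of `±1`'s, so all signs agree. Dimensions `#s ∈ [1, p - 1]` and
`#T ∈ [0, p]` realise every `m ∈ [1, 2p - 1]`.
-/

open Finset Module

variable {ι : Type*}

section ExtendOff

variable [DecidableEq ι] {K : Type*} [Field K]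

def extendOff (s : Finset ι) (f : (s → K) →ₗ[K] K) : (s → K) →ₗ[K] (ι → K) where
  toFun y i := if h : i ∈ s then y ⟨i, h⟩ else f y
  map_add' y z := by ext i; by_cases h : i ∈ s <;> simp [h]
  map_smul' c y := by ext i; by_cases h : i ∈ s <;> simp [h]

theorem extendOff_apply_of_mem {s : Finset ι} (f : (s → K) →ₗ[K] K) (y : s → K) {i : ι}
    (hi : i ∈ s) : extendOff s f y i = y ⟨i, hi⟩ :=
  dif_pos hi

theorem extendOff_apply_of_notMem {s : Finset ι} (f : (s → K) →ₗ[K] K) (y : s → K) {i : ι}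
    (hi : i ∉ s) : extendOff s f y i = f y :=
  dif_neg hi

theorem extendOff_injective (s : Finset ι) (f : (s → K) →ₗ[K] K) :
    Function.Injective (extendOff s f) := by
  intro y z h
  funext ⟨i, hi⟩
  simpa only [extendOff_apply_of_mem f _ hi] using congrFun h i

theorem finrank_range_extendOff (s : Finset ι) (f : (s → K) →ₗ[K] K) :
    finrank K (LinearMap.range (extendOff s f)) = #s := by
  rw [LinearMap.finrank_range_of_inj (extendOff_injective s f),
    Module.finrank_fintype_fun_eq_card, Fintype.card_coe]

end ExtendOff

section MeanSubspace

variable [DecidableEq ι]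

noncomputable def meanSubspace (s : Finset ι) : Submodule ℝ (ι → ℝ) :=
  LinearMap.range (extendOff s ((#s : ℝ)⁻¹ • ∑ j : s, LinearMap.proj j))

theorem finrank_meanSubspace (s : Finset ι) : finrank ℝ (meanSubspace s) = #s :=
  finrank_range_extendOff s _

variable {s : Finset ι}

theorem one_mem_meanSubspace (hs : s.Nonempty) : 1 ∈ meanSubspace s := by
  refine ⟨1, funext fun i => ?_⟩
  by_cases hi : i ∈ s
  · simp [extendOff_apply_of_mem _ _ hi]
  · simp [extendOff_apply_of_notMem _ _ hi, hs.card_pos.ne']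

theorem card_mul_eq_sum_of_mem_meanSubspace (hs : s.Nonempty) {x : ι → ℝ}
    (hx : x ∈ meanSubspace s) {i : ι} (hi : i ∉ s) : #s * x i = ∑ j ∈ s, x j := by
  obtain ⟨y, rfl⟩ := hx
  rw [extendOff_apply_of_notMem _ _ hi, ← Finset.sum_coe_sort s]
  simp [extendOff_apply_of_mem, hs.card_pos.ne']

theorem eq_zero_of_single_mem_meanSubspace [Fintype ι] (hs : s.Nonempty) (hsc : sᶜ.Nonempty)
    {k : ι} {a : ℝ} (h : Pi.single k a ∈ meanSubspace s) : a = 0 := by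
  by_cases hk : k ∈ s
  · obtain ⟨i, hi⟩ := hsc
    rw [mem_compl] at hi
    have hsum := card_mul_eq_sum_of_mem_meanSubspace hs h hi
    rw [Finset.sum_eq_single_of_mem k hk fun j _ hj => by simp [hj]] at hsum
    simpa [(ne_of_mem_of_not_mem hk hi).symm, eq_comm] using hsum
  · have hsum := card_mul_eq_sum_of_mem_meanSubspace hs h hk
    rw [Finset.sum_eq_zero fun j hj => by simp [ne_of_mem_of_not_mem hj hk],
      Pi.single_eq_same] at hsum
    exact (mul_eq_zero.1 hsum).resolve_left (by exact_mod_cast hs.card_pos.ne')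

theorem eq_one_or_eq_neg_one_of_mem_meanSubspace [Fintype ι] (hs : s.Nonempty)
    (hsc : sᶜ.Nonempty) {x : ι → ℝ} (hx : x ∈ meanSubspace s) (hsign : ∀ i, x i = 1 ∨ x i = -1) :
    x = 1 ∨ x = -1 := by
  obtain ⟨i₀, hi₀⟩ := hsc
  rw [mem_compl] at hi₀
  set c := x i₀
  have hc : c * c = 1 := by rcases hsign i₀ with h | h <;> simp [c, h]
  have hsum : ∑ j ∈ s, x j = #s * c := (card_mul_eq_sum_of_mem_meanSubspace hs hx hi₀).symm
  have hconst : ∀ i, x i = c := by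
    intro i
    by_cases hi : i ∈ s
    · -- `c x_j ≤ 1` on `s`, and these terms sum to `#s`, so each equals `1`
      have hle : ∀ j ∈ s, c * x j ≤ 1 := fun j _ => by
        rcases hsign j with h | h <;> rcases hsign i₀ with h' | h' <;> simp [c, h, h']
      have hsum' : ∑ j ∈ s, c * x j = ∑ _j ∈ s, (1 : ℝ) := by
        rw [← mul_sum, hsum, sum_const, nsmul_one]
        linear_combination (#s : ℝ) * hc
      have hci := (sum_eq_sum_iff_of_le hle).1 hsum' i hi
      linear_combination c * hci - x i * hc
    · have hi' := card_mul_eq_sum_of_mem_meanSubspace hs hx hi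
      rw [hsum] at hi'
      exact mul_left_cancel₀ (by exact_mod_cast hs.card_pos.ne') hi'
  rcases hsign i₀ with h | h
  · exact Or.inl (funext fun i => (hconst i).trans h)
  · exact Or.inr (funext fun i => (hconst i).trans h)

end MeanSubspace

section CoordSubspace

variable [DecidableEq ι]

noncomputable def coordSubspace (T : Finset ι) : Submodule ℝ (ι → ℝ) :=
  LinearMap.range (extendOff T 0)

theorem finrank_coordSubspace (T : Finset ι) : finrank ℝ (coordSubspace T) = #T :=
  finrank_range_extendOff T 0

variable {T : Finset ι}

theorem apply_eq_zero_of_mem_coordSubspace {y : ι → ℝ} (hy : y ∈ coordSubspace T) {i : ι}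
    (hi : i ∉ T) : y i = 0 := by
  obtain ⟨y, rfl⟩ := hy
  rw [extendOff_apply_of_notMem _ _ hi, LinearMap.zero_apply]

theorem single_mem_coordSubspace {k : ι} (hk : k ∈ T) (a : ℝ) :
    Pi.single k a ∈ coordSubspace T := by
  refine ⟨Pi.single ⟨k, hk⟩ a, funext fun i => ?_⟩
  by_cases hi : i ∈ T
  · rw [extendOff_apply_of_mem _ _ hi]
    by_cases hik : i = k
    · subst hik; simp
    · simp [Subtype.ext_iff, hik]
  · simp [extendOff_apply_of_notMem _ _ hi, (ne_of_mem_of_not_mem hk hi).symm]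

end CoordSubspace

section ReIm

def reImCombination : (ι → ℝ) × (ι → ℝ) →ₗ[ℝ] (ι → ℂ) where
  toFun xy i := xy.1 i + xy.2 i * Complex.I
  map_add' x y := by funext i; simp; ring
  map_smul' c x := by funext i; simp; ring

theorem reImCombination_injective : Function.Injective (reImCombination (ι := ι)) := by
  intro x y h
  ext i
  · simpa [reImCombination] using congrArg Complex.re (congrFun h i)
  · simpa [reImCombination] using congrArg Complex.im (congrFun h i)

noncomputable def reImSubmodule (A B : Submodule ℝ (ι → ℝ)) : Submodule ℝ (ι → ℂ) :=
  (A.prod B).map reImCombination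

theorem mem_reImSubmodule {A B : Submodule ℝ (ι → ℝ)} {z : ι → ℂ} :
    z ∈ reImSubmodule A B ↔ (fun i => (z i).re) ∈ A ∧ (fun i => (z i).im) ∈ B := by
  constructor
  · rintro ⟨⟨x, y⟩, ⟨hx, hy⟩, rfl⟩
    simpa [reImCombination] using And.intro hx hy
  · intro h
    exact ⟨(_, _), h, funext fun i => Complex.re_add_im (z i)⟩

theorem finrank_reImSubmodule [Fintype ι] (A B : Submodule ℝ (ι → ℝ)) :
    finrank ℝ (reImSubmodule A B) = finrank ℝ A + finrank ℝ B := by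
  have hprod : A.prod B = LinearMap.range (A.subtype.prodMap B.subtype) := by
    rw [LinearMap.range_prodMap, Submodule.range_subtype, Submodule.range_subtype]
  rw [reImSubmodule,
    ← (Submodule.equivMapOfInjective _ reImCombination_injective _).finrank_eq, hprod,
    LinearMap.finrank_range_of_inj (A.injective_subtype.prodMap B.injective_subtype),
    Module.finrank_prod]

end ReIm

section Invariance

variable [DecidableEq ι]

theorem re_piSingle (k : ι) (z : ℂ) :
    (fun i => (Pi.single k z : ι → ℂ) i |>.re) = Pi.single k z.re :=
  funext (Pi.apply_single (fun _ => Complex.re) (fun _ => Complex.zero_re) k z)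

theorem im_piSingle (k : ι) (z : ℂ) :
    (fun i => (Pi.single k z : ι → ℂ) i |>.im) = Pi.single k z.im :=
  funext (Pi.apply_single (fun _ => Complex.im) (fun _ => Complex.zero_im) k z)

theorem re_eq_one_or_eq_neg_one_of_norm_eq_one {z : ℂ} (hz : ‖z‖ = 1) (him : z.im = 0) :
    z.re = 1 ∨ z.re = -1 :=
  abs_eq zero_le_one |>.1 (Complex.abs_re_eq_norm.2 him ▸ hz)

theorem eq_one_or_eq_neg_one_of_forall_mul_mem [Fintype ι] {s T : Finset ι} (hs : s.Nonempty)
    (hsc : sᶜ.Nonempty) {u : ι → ℂ} (hu : ∀ i, ‖u i‖ = 1)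
    (hW : ∀ z ∈ reImSubmodule (meanSubspace s) (coordSubspace T),
      u * z ∈ reImSubmodule (meanSubspace s) (coordSubspace T)) :
    u = 1 ∨ u = -1 := by
  have hone : (1 : ι → ℂ) ∈ reImSubmodule (meanSubspace s) (coordSubspace T) :=
    mem_reImSubmodule.2 ⟨one_mem_meanSubspace hs, (coordSubspace T).zero_mem⟩
  obtain ⟨hre, him⟩ := mem_reImSubmodule.1 (mul_one u ▸ hW 1 hone)
  have him_eq : ∀ k, (u k).im = 0 := by
    intro k
    by_cases hk : k ∈ T
    · have hsingle :
          Pi.single k Complex.I ∈ reImSubmodule (meanSubspace s) (coordSubspace T) := by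
        rw [mem_reImSubmodule, re_piSingle, im_piSingle, Complex.I_re, Pi.single_zero]
        exact ⟨(meanSubspace s).zero_mem, single_mem_coordSubspace hk _⟩
      have hmul := (mem_reImSubmodule.1 (hW _ hsingle)).1
      rw [← Pi.single_mul_right, re_piSingle, Complex.mul_I_re] at hmul
      exact neg_eq_zero.1 (eq_zero_of_single_mem_meanSubspace hs hsc hmul)
    · exact apply_eq_zero_of_mem_coordSubspace him hk
  have hsign : ∀ k, (u k).re = 1 ∨ (u k).re = -1 := fun k =>
    re_eq_one_or_eq_neg_one_of_norm_eq_one (hu k) (him_eq k)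
  rcases eq_one_or_eq_neg_one_of_mem_meanSubspace hs hsc hre hsign with h | h
  · exact Or.inl <| funext fun k =>
      Complex.ext (by simpa using congrFun h k) (by simpa using him_eq k)
  · exact Or.inr <| funext fun k =>
      Complex.ext (by simpa using congrFun h k) (by simpa using him_eq k)

end Invariance

theorem exists_submodule_finrank_eq_forall_mul_mem (ι : Type*) [Fintype ι] [DecidableEq ι]
    {m : ℕ} (hι : 2 ≤ Fintype.card ι) (hm₁ : 1 ≤ m) (hm₂ : m ≤ 2 * Fintype.card ι - 1) :
    ∃ W : Submodule ℝ (ι → ℂ), finrank ℝ W = m ∧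
      ∀ u : ι → ℂ, (∀ i, ‖u i‖ = 1) → (∀ z ∈ W, u * z ∈ W) → u = 1 ∨ u = -1 := by
  obtain ⟨s, -, hs⟩ := exists_subset_card_eq (s := (univ : Finset ι))
    (n := min m (Fintype.card ι - 1)) (by simp)
  obtain ⟨T, -, hT⟩ := exists_subset_card_eq (s := (univ : Finset ι))
    (n := m - min m (Fintype.card ι - 1)) (by simp; omega)
  have hs_ne : s.Nonempty := card_pos.1 (by omega)
  have hsc_ne : sᶜ.Nonempty := card_pos.1 (by rw [card_compl]; omega)
  refine ⟨reImSubmodule (meanSubspace s) (coordSubspace T), ?_,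
    fun u hu hW => eq_one_or_eq_neg_one_of_forall_mul_mem hs_ne hsc_ne hu hW⟩
  rw [finrank_reImSubmodule, finrank_meanSubspace, finrank_coordSubspace]
  omega

/-- There is an `m`-dimensional real subspace of `ℂᵖ` (`1 ≤ m ≤ 2p - 1`) invariant under
no diagonal unitary matrix other than `±1`. -/
theorem exists_real_subspace_not_invariant_diagonal_unitary
    (p m : ℕ) (hp : 2 ≤ p) (hm₁ : 1 ≤ m) (hm₂ : m ≤ 2 * p - 1) :
    ∃ W : Submodule ℝ (Fin p → ℂ), Module.finrank ℝ W = m ∧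
      ∀ U : Matrix (Fin p) (Fin p) ℂ,
        (∀ i j, i ≠ j → U i j = 0) → (∀ i, ‖U i i‖ = 1) →
        (fun v => U.mulVec v) '' (W : Set (Fin p → ℂ)) = (W : Set (Fin p → ℂ)) →
        U = 1 ∨ U = -1 := by
  obtain ⟨W, hW, hrigid⟩ := exists_submodule_finrank_eq_forall_mul_mem (Fin p)
    (m := m) (by simpa using hp) hm₁ (by simpa using hm₂)
  refine ⟨W, hW, fun U hdiag hnorm himg => ?_⟩
  have hU : Matrix.diagonal U.diag = U := Matrix.IsDiag.diagonal_diag fun i j h => hdiag i j h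
  have hmul : ∀ z ∈ W, U.diag * z ∈ W := by
    intro z hz
    have hz' : U.mulVec z ∈ (W : Set (Fin p → ℂ)) := himg ▸ ⟨z, hz, rfl⟩
    rwa [← hU, funext (Matrix.mulVec_diagonal U.diag z)] at hz'
  rcases hrigid U.diag hnorm hmul with h | h
  · left
    rw [← hU, h]
    exact Matrix.diagonal_one
  · right
    rw [← hU, h, ← Matrix.diagonal_one, Matrix.diagonal_neg]
    rfl
end

section
/- Let p ≥ 2 be an integer. There exists a 2-dimensional real linear subspace W of ℂ^p (viewed as a 2p-dimensional real vector space) such that for every unitary matrix U ∈ Mₚ(ℂ) of the form U = D·P, where D is a diagonal unitary matrix and P is a permutation matrix (i.e., U lies in the semidirect product of the diagonal unitaries by the permutation matrices), if U·W = W then U = 1 or U = −1. -/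
/-!
Take `W` spanned over `ℝ` by `𝟙 = (1, …, 1)` and `i r` with `r = (1, 2, …, p)`. If `U = D P_σ`
preserves `W`, then `U 𝟙 = diag D ∈ W` has unimodular entries `a + i b r_j`; as the `r_j²` are
not all equal, `b = 0` and `D = ±1`. Then `U (i r) = ± i (r ∘ σ) ∈ W` forces `r ∘ σ = c r`, summing
gives `c = 1`, and injectivity of `r` gives `σ = 1`.
-/

open Complex Matrix Function

namespace Matrix

variable {n R : Type*} [Fintype n] [DecidableEq n] [CommRing R]

theorem diagonal_mul_permMatrix_mulVec (d : n → R) (σ : Equiv.Perm n) (x : n → R) :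
    (diagonal d * σ.permMatrix R) *ᵥ x = d * (x ∘ σ) := by
  ext i
  rw [← mulVec_mulVec, permMatrix_mulVec, mulVec_diagonal, Pi.mul_apply]

end Matrix

theorem Equiv.Perm.eq_one_of_comp_eq_mul {ι : Type*} [Fintype ι] {r : ι → ℝ} (hr : Injective r)
    (hsum : ∑ j, r j ≠ 0) {σ : Equiv.Perm ι} {c : ℝ} (h : ∀ j, r (σ j) = c * r j) : σ = 1 := by
  have hc : c = 1 := by
    refine (mul_eq_right₀ hsum).mp ?_
    calc c * ∑ j, r j = ∑ j, r (σ j) := by simp only [Finset.mul_sum, h]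
      _ = ∑ j, r j := Equiv.sum_comp σ r
  exact Equiv.ext fun j => hr (by rw [h, hc, one_mul]; rfl)

section ConstImagPlane

variable {ι : Type*}

noncomputable def constImagPlane (r : ι → ℝ) : Submodule ℝ (ι → ℂ) :=
  Submodule.span ℝ {1, fun j => r j * I}

variable {r : ι → ℝ}

theorem mem_constImagPlane_iff {x : ι → ℂ} :
    x ∈ constImagPlane r ↔ ∃ a b : ℝ, ∀ j, x j = a + b * r j * I := by
  simp only [constImagPlane, Submodule.mem_span_pair, funext_iff, Pi.add_apply, Pi.smul_apply,
    Pi.one_apply, real_smul, mul_one, mul_assoc, eq_comm]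

theorem finrank_constImagPlane (hr : r ≠ 0) : Module.finrank ℝ (constImagPlane r) = 2 := by
  obtain ⟨j, hj⟩ := Function.ne_iff.mp hr
  have hli : LinearIndependent ℝ ![1, fun j => (r j : ℂ) * I] := by
    refine LinearIndependent.pair_iff.mpr fun a b hab => ?_
    have hj' := congrFun hab j
    simp only [Pi.add_apply, Pi.smul_apply, Pi.one_apply, real_smul, Pi.zero_apply] at hj'
    have ha : a = 0 := by simpa using congrArg re hj'
    have hb : b * r j = 0 := by simpa using congrArg im hj'
    exact ⟨ha, (mul_eq_zero.mp hb).resolve_right hj⟩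
  have := finrank_span_eq_card hli
  rwa [range_cons_cons_empty] at this

theorem eq_one_or_eq_neg_one_of_mem_constImagPlane (hr : ∃ i j, r i ^ 2 ≠ r j ^ 2) {x : ι → ℂ}
    (hx : x ∈ constImagPlane r) (hnorm : ∀ j, ‖x j‖ = 1) : x = 1 ∨ x = -1 := by
  obtain ⟨a, b, hab⟩ := mem_constImagPlane_iff.mp hx
  have hsq : ∀ j, a ^ 2 + (b * r j) ^ 2 = 1 := fun j => by
    simpa [hab j, ← ofReal_mul, norm_add_mul_I] using hnorm j
  obtain ⟨i, j, hij⟩ := hr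
  have hb : b = 0 := by
    have : b ^ 2 * (r i ^ 2 - r j ^ 2) = 0 := by linear_combination hsq i - hsq j
    simpa [sub_eq_zero, hij] using this
  have ha : a = 1 ∨ a = -1 := sq_eq_one_iff.mp (by simpa [hb] using hsq i)
  rcases ha with rfl | rfl
  exacts [.inl (funext fun j => by simp [hab j, hb]), .inr (funext fun j => by simp [hab j, hb])]

theorem Equiv.Perm.eq_one_of_comp_mem_constImagPlane [Fintype ι] (hr : Injective r)
    (hsum : ∑ j, r j ≠ 0) {σ : Equiv.Perm ι} (h : (fun j => (r j : ℂ) * I) ∘ σ ∈ constImagPlane r) :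
    σ = 1 := by
  obtain ⟨a, b, hab⟩ := mem_constImagPlane_iff.mp h
  refine σ.eq_one_of_comp_eq_mul hr hsum (c := b) fun j => ?_
  simpa using congrArg im (hab j)

end ConstImagPlane

/-- There is a 2-dimensional real subspace of `ℂᵖ` (`p ≥ 2`) invariant under no unitary of
the form `D * P` (diagonal unitary times permutation matrix) other than `±1`. -/
theorem exists_real_plane_not_invariant_diagonal_perm_unitary (p : ℕ) (hp : 2 ≤ p) :
    ∃ W : Submodule ℝ (Fin p → ℂ), Module.finrank ℝ W = 2 ∧
      ∀ (D : Matrix (Fin p) (Fin p) ℂ) (σ : Equiv.Perm (Fin p)),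
        (∀ i j, i ≠ j → D i j = 0) → (∀ i, ‖D i i‖ = 1) →
        ∀ U : Matrix (Fin p) (Fin p) ℂ, U = D * σ.permMatrix ℂ →
        (fun v => U.mulVec v) '' (W : Set (Fin p → ℂ)) = (W : Set (Fin p → ℂ)) →
        U = 1 ∨ U = -1 := by
  have : Nontrivial (Fin p) := Fin.nontrivial_iff_two_le.mpr hp
  set r : Fin p → ℝ := fun j => (j : ℝ) + 1
  have hr : Injective r := fun i j h => Fin.ext (by simpa [r] using h)
  have hr0 : ∀ j, 0 < r j := fun j => by positivity
  obtain ⟨i, j, hij⟩ := exists_pair_ne (Fin p)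
  refine ⟨constImagPlane r, finrank_constImagPlane (ne_iff.mpr ⟨i, (hr0 i).ne'⟩), ?_⟩
  rintro D σ hoff hnorm _ rfl hW
  obtain ⟨d, rfl⟩ : ∃ d, D = diagonal d := ⟨_, (IsDiag.diagonal_diag hoff).symm⟩
  have hmaps : ∀ x ∈ constImagPlane r, d * (x ∘ σ) ∈ constImagPlane r := fun x hx =>
    diagonal_mul_permMatrix_mulVec d σ x ▸ hW.subset ⟨x, hx, rfl⟩
  have hd : d = 1 ∨ d = -1 := by
    refine eq_one_or_eq_neg_one_of_mem_constImagPlane (r := r) ⟨i, j, ?_⟩ ?_ (by simpa using hnorm)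
    · rw [Ne, pow_left_inj₀ (hr0 i).le (hr0 j).le two_ne_zero]
      exact hr.ne hij
    · simpa using hmaps 1 (Submodule.subset_span (Set.mem_insert _ _))
  have hσ : σ = 1 := by
    refine σ.eq_one_of_comp_mem_constImagPlane hr
      (Finset.sum_pos (fun j _ => hr0 j) ⟨i, Finset.mem_univ _⟩).ne' ?_
    have := hmaps _ (Submodule.subset_span (Set.mem_insert_of_mem _ rfl))
    rcases hd with rfl | rfl
    · simpa using this
    · simpa using neg_mem this
  rw [hσ, permMatrix_one, mul_one]
  rcases hd with rfl | rfl
  · exact .inl diagonal_one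
  · exact .inr (by rw [← diagonal_one, diagonal_neg]; rfl)
end

section
/- Let n ≥ 3 and d ≥ 1, and suppose there exists a linearly independent d-tuple (Y₁, …, Y_d) of Hermitian (n−1)×(n−1) complex matrices, each with all diagonal entries equal to zero, such that every diagonal unitary matrix D ∈ M_{n−1}(ℂ) satisfying D · span_ℂ(Y₁,…,Y_d) · Dᴴ = span_ℂ(Y₁,…,Y_d) is a scalar multiple of the identity. Then there exists a linearly independent (d+1)-tuple (X₁, …, X_{d+1}) of traceless Hermitian n×n complex matrices such that every unitary U ∈ Mₙ(ℂ) with U · span_ℂ(X₁,…,X_{d+1}) · Uᴴ = span_ℂ(X₁,…,X_{d+1}) is a scalar multiple of the identity. -/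
/-
Put the `Y i` in the top left corner of `(m+1) × (m+1)` matrices and add the real symmetric
matrix `A = diag μ + E₀ₘ + Eₘ₀`, where `μ₀ = -1`, `μₘ = 1` and the middle weights are distinct
integers of absolute value at least `2` summing to `0` (this needs `m ≥ 3`; for `m = 2` the
hypothesis fails, since `diag(-1, 1)` negates every zero-diagonal `2 × 2` matrix). Then `A²` is
diagonal and equals `2` exactly at the indices `0` and `m`.

Let `U` preserve the span and write `U A Uᴴ = Z + c A` with `Z` in the corner. The entry `(m, m)`
of `(U A Uᴴ)² = U A² Uᴴ` gives `|c|² ≥ 1`, and comparing traces of squares (`Z ⟂ A`) gives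
`‖Z‖² = (1 - c²) tr A²`; hence `Z = 0` and `c = ±1`. So `U` commutes with `A²`, i.e. the rows `0`
and `m` of `U` live on `{0, m}`. This kills the `A`-component of `U (Y i) Uᴴ`, and then
`(Y i) Uᴴ eₘ = 0`; unless `U_{m0} = 0`, all `Y i` have a zero first column, which the stabilizer
hypothesis forbids (take `diag(-1, 1, …, 1)`). Now `(U A Uᴴ)ₘₘ = |Uₘₘ|² = 1` gives `c = 1`, and
`U` commuting with `A` is diagonal with `U₀₀ = Uₘₘ`; its corner is a diagonal unitary stabilizing
the span of the `Y i`, hence scalar, and so is `U`.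
-/

open Matrix
open scoped ComplexOrder

lemma apply_self_eq_zero_of_mem_span {ι κ : Type*} {Y : κ → Matrix ι ι ℂ}
    (hY : ∀ i k, Y i k k = 0) {y : Matrix ι ι ℂ} (hy : y ∈ Submodule.span ℂ (Set.range Y))
    (k : ι) : y k k = 0 := by
  have : Submodule.span ℂ (Set.range Y) ≤ LinearMap.ker (diagLinearMap ι ℂ ℂ) :=
    Submodule.span_le.2 (by rintro _ ⟨i, rfl⟩; ext k; exact hY i k)
  exact congr_fun (this hy) k

section Unitary

variable {ι : Type*} [Fintype ι]

lemma conj_apply_self_eq_zero {U M : Matrix ι ι ℂ} {i : ι}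
    (h : ∀ j l, U i j ≠ 0 → U i l ≠ 0 → M j l = 0) : (U * M * Uᴴ) i i = 0 := by
  simp only [mul_apply, conjTranspose_apply, Finset.sum_mul]
  refine Finset.sum_eq_zero fun l _ => Finset.sum_eq_zero fun j _ => ?_
  by_cases hj : U i j = 0
  · simp [hj]
  by_cases hl : U i l = 0
  · simp [hl]
  simp [h j l hj hl]

variable [DecidableEq ι]

lemma apply_eq_zero_of_mul_diagonal_eq {U : Matrix ι ι ℂ} {d : ι → ℂ}
    (h : U * diagonal d = diagonal d * U) {k l : ι} (hkl : d k ≠ d l) : U k l = 0 := by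
  have := congr_fun₂ h k l
  rw [mul_diagonal, diagonal_mul] at this
  have : (d l - d k) * U k l = 0 := by linear_combination this
  exact (mul_eq_zero.1 this).resolve_left (sub_ne_zero.2 hkl.symm)

lemma sum_normSq_apply_eq_one {U : Matrix ι ι ℂ} (hU : U ∈ unitaryGroup ι ℂ) (k : ι) :
    ∑ j, Complex.normSq (U k j) = 1 := by
  rw [mem_unitaryGroup_iff, star_eq_conjTranspose] at hU
  have := congr_fun₂ hU k k
  simp only [mul_apply, conjTranspose_apply, one_apply_eq, RCLike.star_def,
    Complex.mul_conj] at this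
  exact_mod_cast this

lemma conj_mul_conj {U : Matrix ι ι ℂ} (hU : U ∈ unitaryGroup ι ℂ) (M N : Matrix ι ι ℂ) :
    U * M * Uᴴ * (U * N * Uᴴ) = U * (M * N) * Uᴴ := by
  have := Unitary.star_mul_self_of_mem hU
  rw [star_eq_conjTranspose] at this
  simp only [mul_assoc]
  rw [← mul_assoc Uᴴ, this, one_mul]

lemma trace_conj {U : Matrix ι ι ℂ} (hU : U ∈ unitaryGroup ι ℂ) (M : Matrix ι ι ℂ) :
    (U * M * Uᴴ).trace = M.trace := by
  rw [trace_mul_cycle, ← star_eq_conjTranspose, Unitary.star_mul_self_of_mem hU, one_mul]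

lemma conj_diagonal_apply_self (U : Matrix ι ι ℂ) (w : ι → ℝ) (i : ι) :
    (U * diagonal (fun j => (w j : ℂ)) * Uᴴ) i i =
      ((∑ j, w j * Complex.normSq (U i j) : ℝ) : ℂ) := by
  simp only [mul_apply, conjTranspose_apply, diagonal_apply]
  push_cast
  refine Finset.sum_congr rfl fun j _ => ?_
  rw [← Complex.mul_conj]
  simp
  ring

lemma mul_eq_mul_of_conj_eq {U M : Matrix ι ι ℂ} (hU : U ∈ unitaryGroup ι ℂ)
    (h : U * M * Uᴴ = M) : U * M = M * U := by
  conv_rhs => rw [← h]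
  rw [mul_assoc _ Uᴴ, ← star_eq_conjTranspose, Unitary.star_mul_self_of_mem hU, mul_one]

lemma mul_single_apply_eq_ite {α : Type*} [NonUnitalNonAssocSemiring α] (M : Matrix ι ι α)
    (i j a b : ι) (c : α) : (M * single i j c) a b = if b = j then M a i * c else 0 := by
  by_cases h : b = j <;> simp [h]

lemma single_mul_apply_eq_ite {α : Type*} [NonUnitalNonAssocSemiring α] (M : Matrix ι ι α)
    (i j a b : ι) (c : α) : (single i j c * M) a b = if a = i then c * M j b else 0 := by
  by_cases h : a = i <;> simp [h]

lemma diagonal_mem_unitaryGroup {u : ι → ℂ} (hu : ∀ k, ‖u k‖ = 1) :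
    diagonal u ∈ unitaryGroup ι ℂ := by
  rw [mem_unitaryGroup_iff', star_eq_conjTranspose, diagonal_conjTranspose, diagonal_mul_diagonal,
    ← diagonal_one]
  congr 1
  funext k
  simp [← Complex.normSq_eq_conj_mul_self, Complex.normSq_eq_norm_sq, hu]

lemma norm_apply_self_of_isDiag {U : Matrix ι ι ℂ}
    (hU : U ∈ unitaryGroup ι ℂ) (hdiag : U.IsDiag) (k : ι) : ‖U k k‖ = 1 := by
  have := sum_normSq_apply_eq_one hU k
  rw [Finset.sum_eq_single k (fun j _ hj => by simp [hdiag hj.symm]) (by simp)] at this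
  rw [Complex.norm_def, this, Real.sqrt_one]

lemma image_conj_span_eq {κ : Type*} {U : Matrix ι ι ℂ} (hU : U ∈ unitaryGroup ι ℂ)
    (Y : κ → Matrix ι ι ℂ)
    (hY : ∀ i, U * Y i * Uᴴ ∈ Submodule.span ℂ (Set.range Y)) :
    (fun x => U * x * Uᴴ) '' (Submodule.span ℂ (Set.range Y) : Set (Matrix ι ι ℂ)) =
      Submodule.span ℂ (Set.range Y) := by
  set f := LinearMap.mulLeftRight ℂ (U, Uᴴ)
  have hf : Function.Injective f := fun x y hxy => by
    have := congr_arg (fun z => Uᴴ * z * U) hxy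
    simpa [f, ← mul_assoc, Unitary.star_mul_self_of_mem hU, mul_assoc _ _ U,
      ← star_eq_conjTranspose] using this
  set V := Submodule.span ℂ (Set.range Y)
  have hle : V.map f ≤ V := by
    rw [Submodule.map_span_le]
    rintro _ ⟨i, rfl⟩
    exact hY i
  have heq : V.map f = V :=
    Submodule.eq_of_le_of_finrank_eq hle (Submodule.equivMapOfInjective f hf V).finrank_eq.symm
  exact (Submodule.map_coe f V).symm.trans (congrArg SetLike.coe heq)

end Unitary

section Stabilizer

variable {ι κ : Type*} [Fintype ι] [DecidableEq ι]

def HasTrivialDiagonalStabilizer (Y : κ → Matrix ι ι ℂ) : Prop :=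
  ∀ D : Matrix ι ι ℂ, (∀ k l, k ≠ l → D k l = 0) → (∀ k, ‖D k k‖ = 1) →
    (fun x => D * x * Dᴴ) '' (Submodule.span ℂ (Set.range Y) : Set (Matrix ι ι ℂ)) =
      (Submodule.span ℂ (Set.range Y) : Set (Matrix ι ι ℂ)) →
    ∃ c : ℂ, D = c • (1 : Matrix ι ι ℂ)

namespace HasTrivialDiagonalStabilizer

variable {Y : κ → Matrix ι ι ℂ} (hY : HasTrivialDiagonalStabilizer Y)
include hY

lemma apply_eq {u : ι → ℂ} (hu : ∀ k, ‖u k‖ = 1)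
    (hmem : ∀ i, diagonal u * Y i * (diagonal u)ᴴ ∈ Submodule.span ℂ (Set.range Y)) (k l : ι) :
    u k = u l := by
  obtain ⟨c, hc⟩ := hY (diagonal u) (fun k l hkl => diagonal_apply_ne u hkl)
    (by simpa using hu) (image_conj_span_eq (diagonal_mem_unitaryGroup hu) Y hmem)
  have hk := congr_fun₂ hc k k
  have hl := congr_fun₂ hc l l
  simp only [diagonal_apply_eq, Matrix.smul_apply, one_apply_eq, smul_eq_mul, mul_one] at hk hl
  rw [hk, hl]

lemma exists_apply_ne_zero (hherm : ∀ i, (Y i).IsHermitian) {p q : ι} (hpq : p ≠ q) :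
    ∃ i k, Y i k p ≠ 0 := by
  by_contra! hcol
  have hrow : ∀ i l, Y i p l = 0 := fun i l => by
    rw [← (hherm i).apply, hcol, star_zero]
  have hfix : ∀ i, diagonal (fun k => if k = p then -1 else 1) * Y i *
      (diagonal (fun k => if k = p then -1 else 1))ᴴ = Y i := fun i => by
    ext k l
    by_cases hk : k = p <;> by_cases hl : l = p <;>
      simp [diagonal_conjTranspose, hk, hl, hcol, hrow]
  have := hY.apply_eq (u := fun k => if k = p then -1 else 1) (fun k => by split_ifs <;> simp)
    (fun i => by rw [hfix]; exact Submodule.subset_span ⟨i, rfl⟩) p q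
  norm_num [hpq.symm] at this

end HasTrivialDiagonalStabilizer

lemma not_hasTrivialDiagonalStabilizer_of_fin_two {Y : κ → Matrix (Fin 2) (Fin 2) ℂ}
    (hdiag : ∀ i k, Y i k k = 0) : ¬HasTrivialDiagonalStabilizer Y := fun hY => by
  have hneg : ∀ i, diagonal ![-1, 1] * Y i * (diagonal ![-1, 1])ᴴ = -Y i := fun i => by
    ext k l
    fin_cases k <;> fin_cases l <;> simp [diagonal_conjTranspose, hdiag]
  have := hY.apply_eq (u := ![-1, 1]) (fun k => by fin_cases k <;> simp)
    (fun i => by rw [hneg]; exact neg_mem (Submodule.subset_span ⟨i, rfl⟩)) 0 1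
  norm_num at this

end Stabilizer

variable {m : ℕ}

lemma three_le_of_hasTrivialDiagonalStabilizer {κ : Type*} {Y : κ → Matrix (Fin m) (Fin m) ℂ}
    (hY : HasTrivialDiagonalStabilizer Y) (hdiag : ∀ i k, Y i k k = 0) (hm : 2 ≤ m) : 3 ≤ m := by
  by_contra h
  obtain rfl : m = 2 := by omega
  exact not_hasTrivialDiagonalStabilizer_of_fin_two hdiag hY

section PadLast

variable {R : Type*} [CommSemiring R]

def padLast : Matrix (Fin m) (Fin m) R →ₗ[R] Matrix (Fin (m + 1)) (Fin (m + 1)) R where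
  toFun M := Matrix.of fun i j => Fin.lastCases 0 (fun k => Fin.lastCases 0 (M k) j) i
  map_add' M N := by
    ext i j
    induction i using Fin.lastCases <;> induction j using Fin.lastCases <;> simp
  map_smul' c M := by
    ext i j
    induction i using Fin.lastCases <;> induction j using Fin.lastCases <;> simp

@[simp]
lemma padLast_castSucc_castSucc (M : Matrix (Fin m) (Fin m) R) (k l : Fin m) :
    padLast M k.castSucc l.castSucc = M k l := by
  simp [padLast]

@[simp]
lemma padLast_last_left (M : Matrix (Fin m) (Fin m) R) (l : Fin (m + 1)) :
    padLast M (Fin.last m) l = 0 := by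
  simp [padLast]

@[simp]
lemma padLast_last_right (M : Matrix (Fin m) (Fin m) R) (k : Fin (m + 1)) :
    padLast M k (Fin.last m) = 0 := by
  induction k using Fin.lastCases <;> simp [padLast]

lemma padLast_apply_self {M : Matrix (Fin m) (Fin m) R} (hM : ∀ k, M k k = 0) (k : Fin (m + 1)) :
    padLast M k k = 0 := by
  induction k using Fin.lastCases <;> simp [hM]

lemma submatrix_padLast (M : Matrix (Fin m) (Fin m) R) :
    (padLast M).submatrix Fin.castSucc Fin.castSucc = M := by
  ext k l
  simp

lemma padLast_injective : Function.Injective (padLast (m := m) (R := R)) := fun M N h => by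
  rw [← submatrix_padLast M, h, submatrix_padLast]

lemma trace_padLast {M : Matrix (Fin m) (Fin m) R} (hM : ∀ k, M k k = 0) :
    (padLast M).trace = 0 :=
  Finset.sum_eq_zero fun k _ => padLast_apply_self hM k

lemma isHermitian_padLast [StarRing R] {M : Matrix (Fin m) (Fin m) R} (hM : M.IsHermitian) :
    (padLast M).IsHermitian := by
  ext i j
  induction i using Fin.lastCases <;> induction j using Fin.lastCases <;>
    simp [hM.apply]

lemma padLast_diagonal_conj (u : Fin (m + 1) → R) [StarRing R] (M : Matrix (Fin m) (Fin m) R) :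
    diagonal u * padLast M * (diagonal u)ᴴ =
      padLast (diagonal (u ∘ Fin.castSucc) * M * (diagonal (u ∘ Fin.castSucc))ᴴ) := by
  ext i j
  induction i using Fin.lastCases <;> induction j using Fin.lastCases <;>
    simp [diagonal_conjTranspose]

end PadLast

lemma eq_smul_one_of_isDiag [NeZero m] {κ : Type*} {Y : κ → Matrix (Fin m) (Fin m) ℂ}
    (hY : HasTrivialDiagonalStabilizer Y) {U : Matrix (Fin (m + 1)) (Fin (m + 1)) ℂ}
    (hU : U ∈ unitaryGroup (Fin (m + 1)) ℂ) (hdiag : U.IsDiag)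
    (h0L : U 0 0 = U (Fin.last m) (Fin.last m))
    (hmem : ∀ i, ∃ y ∈ Submodule.span ℂ (Set.range Y), U * padLast (Y i) * Uᴴ = padLast y) :
    ∃ c : ℂ, U = c • (1 : Matrix (Fin (m + 1)) (Fin (m + 1)) ℂ) := by
  have hUd : U = diagonal U.diag := hdiag.diagonal_diag.symm
  have heq := hY.apply_eq (u := U.diag ∘ Fin.castSucc)
    (fun k => norm_apply_self_of_isDiag hU hdiag _) fun i => by
      obtain ⟨y, hy, h⟩ := hmem i
      rw [hUd, padLast_diagonal_conj] at h
      rwa [padLast_injective h]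
  refine ⟨U 0 0, ?_⟩
  ext k l
  by_cases hkl : k = l
  · subst hkl
    induction k using Fin.lastCases with
    | last => simp [h0L]
    | cast k => simpa using heq k 0
  · simp [hdiag hkl, hkl]

structure IsAdmissibleWeight (μ : Fin (m + 1) → ℤ) : Prop where
  apply_zero : μ 0 = -1
  apply_last : μ (Fin.last m) = 1
  two_le_abs : ∀ k, k ≠ 0 → k ≠ Fin.last m → 2 ≤ |μ k|
  injective : Function.Injective μ

-- `μ = (-1, -(2 + ⋯ + (m - 1)), 2, 3, …, m - 1, 1)`
lemma exists_isAdmissibleWeight (hm : 3 ≤ m) :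
    ∃ μ : Fin (m + 1) → ℤ, IsAdmissibleWeight μ ∧ ∑ k, μ k = 0 := by
  set S : ℤ := ∑ i ∈ Finset.range (m + 1), if 2 ≤ i ∧ i < m then (i : ℤ) else 0
  have hS : 2 ≤ S := by
    have := Finset.single_le_sum (s := Finset.range (m + 1))
      (f := fun i => if 2 ≤ i ∧ i < m then (i : ℤ) else 0)
      (fun i _ => by positivity) (Finset.mem_range.2 (by omega : 2 < m + 1))
    simpa [show 2 < m by omega] using this
  set g : ℕ → ℤ := fun i => if i = 0 then -1 else if i = m then 1 else if i = 1 then -S else i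
  have hg : ∀ i ∈ Finset.range (m + 1), g i = (if 2 ≤ i ∧ i < m then (i : ℤ) else 0) +
      (if i = m then 1 else 0) - (if i = 0 then 1 else 0) - (if i = 1 then S else 0) := by
    intro i hi
    simp only [Finset.mem_range] at hi
    simp only [g]
    split_ifs <;> omega
  refine ⟨fun k => g k, ⟨by simp [g], by simp [g]; omega, fun k hk0 hkL => ?_,
    fun k l hkl => ?_⟩, ?_⟩
  · have h0 : k.val ≠ 0 := fun h => hk0 (Fin.ext (by simpa using h))
    have hL : k.val ≠ m := fun h => hkL (Fin.ext (by simpa using h))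
    simp only [g, h0, hL, if_false]
    split_ifs
    · rw [abs_neg, abs_of_nonneg] <;> omega
    · rw [abs_of_nonneg] <;> omega
  · have := k.isLt
    have := l.isLt
    simp only [g] at hkl
    rw [Fin.ext_iff]
    split_ifs at hkl <;> omega
  · rw [Fin.sum_univ_eq_sum_range (fun i => g i), Finset.sum_congr rfl hg]
    simp only [Finset.sum_sub_distrib, Finset.sum_add_distrib, Finset.sum_ite_eq',
      Finset.mem_range]
    simp [S, show 0 < m by omega]

def couplingMatrix (μ : Fin (m + 1) → ℤ) : Matrix (Fin (m + 1)) (Fin (m + 1)) ℂ :=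
  diagonal (fun k => (μ k : ℂ)) + single 0 (Fin.last m) 1 + single (Fin.last m) 0 1

def sqWeight (μ : Fin (m + 1) → ℤ) (k : Fin (m + 1)) : ℝ :=
  if k = 0 ∨ k = Fin.last m then 2 else μ k ^ 2

@[simp]
lemma sqWeight_last (μ : Fin (m + 1) → ℤ) : sqWeight μ (Fin.last m) = 2 := by
  simp [sqWeight]

lemma couplingMatrix_isHermitian (μ : Fin (m + 1) → ℤ) : (couplingMatrix μ).IsHermitian := by
  simp only [IsHermitian, couplingMatrix, conjTranspose_add, diagonal_conjTranspose,
    conjTranspose_single, star_one]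
  rw [add_assoc, add_comm (single _ _ _), ← add_assoc]
  congr
  ext k
  simp

section CouplingMatrix

variable {μ : Fin (m + 1) → ℤ}

lemma mul_couplingMatrix_apply (U : Matrix (Fin (m + 1)) (Fin (m + 1)) ℂ) (k l : Fin (m + 1)) :
    (U * couplingMatrix μ) k l = U k l * μ l + (if l = Fin.last m then U k 0 else 0) +
      (if l = 0 then U k (Fin.last m) else 0) := by
  simp [couplingMatrix, mul_add, mul_single_apply_eq_ite]

lemma couplingMatrix_mul_apply (U : Matrix (Fin (m + 1)) (Fin (m + 1)) ℂ) (k l : Fin (m + 1)) :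
    (couplingMatrix μ * U) k l = μ k * U k l + (if k = 0 then U (Fin.last m) l else 0) +
      (if k = Fin.last m then U 0 l else 0) := by
  simp [couplingMatrix, add_mul, single_mul_apply_eq_ite]

lemma couplingMatrix_apply (k l : Fin (m + 1)) :
    couplingMatrix μ k l = (if k = l then (μ k : ℂ) else 0) +
      (if k = 0 ∧ l = Fin.last m then 1 else 0) + (if k = Fin.last m ∧ l = 0 then 1 else 0) := by
  simp [couplingMatrix, diagonal_apply, single_apply, eq_comm]

lemma trace_couplingMatrix_mul_padLast {Y : Matrix (Fin m) (Fin m) ℂ}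
    (hY : ∀ k, Y k k = 0) : (couplingMatrix μ * padLast Y).trace = 0 := by
  simp [trace, couplingMatrix_mul_apply, padLast_apply_self hY]

namespace IsAdmissibleWeight

variable (hμ : IsAdmissibleWeight μ)
include hμ

lemma ne_zero : m ≠ 0 := by
  rintro rfl
  have := hμ.apply_last
  rw [Fin.last_zero, hμ.apply_zero] at this
  norm_num at this

lemma zero_ne_last : (0 : Fin (m + 1)) ≠ Fin.last m := by
  simpa [eq_comm] using hμ.ne_zero

lemma four_le_sq {k : Fin (m + 1)} (hk0 : k ≠ 0) (hkL : k ≠ Fin.last m) : 4 ≤ (μ k : ℝ) ^ 2 := by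
  have : (2 : ℝ) ≤ |(μ k : ℝ)| := by exact_mod_cast hμ.two_le_abs k hk0 hkL
  nlinarith [sq_abs (μ k : ℝ)]

lemma two_le_sqWeight (k : Fin (m + 1)) : 2 ≤ sqWeight μ k := by
  unfold sqWeight
  split_ifs with hk
  · rfl
  · push Not at hk
    linarith [hμ.four_le_sq hk.1 hk.2]

lemma sqWeight_eq_two_iff {k : Fin (m + 1)} : sqWeight μ k = 2 ↔ k = 0 ∨ k = Fin.last m := by
  unfold sqWeight
  split_ifs with hk
  · simpa using hk
  · push Not at hk
    simp only [hk.1, hk.2, or_self, iff_false]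
    linarith [hμ.four_le_sq hk.1 hk.2]

lemma couplingMatrix_mul_self :
    couplingMatrix μ * couplingMatrix μ = diagonal (fun k => (sqWeight μ k : ℂ)) := by
  have := hμ.ne_zero
  ext k l
  rw [couplingMatrix_mul_apply]
  by_cases hk0 : k = 0 <;> by_cases hkL : k = Fin.last m <;> by_cases hl0 : l = 0 <;>
    by_cases hlL : l = Fin.last m <;> by_cases hkl : k = l <;>
    simp_all [couplingMatrix_apply, sqWeight, eq_comm, sq, hμ.apply_zero, hμ.apply_last] <;>
    norm_num

lemma trace_couplingMatrix : (couplingMatrix μ).trace = ∑ k, (μ k : ℂ) := by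
  simp [couplingMatrix, hμ.zero_ne_last, hμ.zero_ne_last.symm]

lemma couplingMatrix_last_last : couplingMatrix μ (Fin.last m) (Fin.last m) = 1 := by
  simp [couplingMatrix_apply, hμ.zero_ne_last.symm, hμ.apply_last]

section Rigidity

variable {U : Matrix (Fin (m + 1)) (Fin (m + 1)) ℂ} (hU : U ∈ unitaryGroup (Fin (m + 1)) ℂ)

lemma exists_real_of_conj_eq {Y : Matrix (Fin m) (Fin m) ℂ} {c : ℂ}
    (hc : U * couplingMatrix μ * Uᴴ = padLast Y + c • couplingMatrix μ) : ∃ r : ℝ, c = r := by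
  have := (isHermitian_mul_mul_conjTranspose U (couplingMatrix_isHermitian μ)).apply 0
    (Fin.last m)
  rw [hc] at this
  simp [couplingMatrix_apply, hμ.ne_zero] at this
  exact Complex.conj_eq_iff_real.1 this

include hU

lemma one_le_sq_of_conj_eq {Y : Matrix (Fin m) (Fin m) ℂ} {r : ℝ}
    (hc : U * couplingMatrix μ * Uᴴ = padLast Y + (r : ℂ) • couplingMatrix μ) : 1 ≤ r ^ 2 := by
  set A := couplingMatrix μ
  have h := congr_fun₂ (conj_mul_conj hU A A) (Fin.last m) (Fin.last m)
  have hsq : ((padLast Y + (r : ℂ) • A) * (padLast Y + (r : ℂ) • A)) (Fin.last m) (Fin.last m) =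
      (r : ℂ) ^ 2 * (A * A) (Fin.last m) (Fin.last m) := by
    simp only [mul_apply, Matrix.add_apply, Matrix.smul_apply, padLast_last_left,
      padLast_last_right, smul_eq_mul, zero_add, Finset.mul_sum]
    exact Finset.sum_congr rfl fun _ _ => by ring
  rw [hc, hsq, hμ.couplingMatrix_mul_self, conj_diagonal_apply_self, diagonal_apply_eq,
    sqWeight_last] at h
  have h2 : 2 ≤ ∑ j, sqWeight μ j * Complex.normSq (U (Fin.last m) j) := calc
    (2 : ℝ) = ∑ j, 2 * Complex.normSq (U (Fin.last m) j) := by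
      rw [← Finset.mul_sum, sum_normSq_apply_eq_one hU, mul_one]
    _ ≤ _ := Finset.sum_le_sum fun j _ =>
      mul_le_mul_of_nonneg_right (hμ.two_le_sqWeight j) (Complex.normSq_nonneg _)
  have : r ^ 2 * 2 = ∑ j, sqWeight μ j * Complex.normSq (U (Fin.last m) j) := by
    exact_mod_cast h
  linarith

lemma padLast_eq_zero_of_conj_eq {Y : Matrix (Fin m) (Fin m) ℂ} (hY : ∀ k, Y k k = 0) {r : ℝ}
    (hc : U * couplingMatrix μ * Uᴴ = padLast Y + (r : ℂ) • couplingMatrix μ) (hr : 1 ≤ r ^ 2) :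
    padLast Y = 0 ∧ r ^ 2 = 1 := by
  set A := couplingMatrix μ
  set Z := padLast Y
  have hA : Aᴴ = A := couplingMatrix_isHermitian μ
  have hZ : Zᴴ = Z := by
    have hB := (isHermitian_mul_mul_conjTranspose U (couplingMatrix_isHermitian μ)).eq
    rw [hc, conjTranspose_add, conjTranspose_smul, hA] at hB
    simpa using hB
  have hAZ : (A * Z).trace = 0 := trace_couplingMatrix_mul_padLast hY
  have htr : (A * A).trace = (Zᴴ * Z).trace + (r : ℂ) ^ 2 * (A * A).trace := calc
    (A * A).trace = ((Z + (r : ℂ) • A) * (Z + (r : ℂ) • A)).trace := by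
      rw [← hc, conj_mul_conj hU, trace_conj hU]
    _ = (Zᴴ * Z).trace + (r : ℂ) ^ 2 * (A * A).trace := by
      simp only [hZ, mul_add, add_mul, trace_add, Matrix.smul_mul, Matrix.mul_smul, trace_smul,
        smul_eq_mul, trace_mul_comm Z A, hAZ]
      ring
  have hT : (A * A).trace = ((∑ k, sqWeight μ k : ℝ) : ℂ) := by
    simp [A, hμ.couplingMatrix_mul_self, trace_diagonal]
  have hTpos : 0 < ∑ k, sqWeight μ k :=
    Finset.sum_pos (fun k _ => by linarith [hμ.two_le_sqWeight k]) Finset.univ_nonempty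
  have hZZ : (Zᴴ * Z).trace = (((1 - r ^ 2) * ∑ k, sqWeight μ k : ℝ) : ℂ) := by
    rw [Complex.ofReal_mul, ← hT]
    push_cast
    linear_combination -htr
  have hnonneg : 0 ≤ (1 - r ^ 2) * ∑ k, sqWeight μ k := by
    have := (posSemidef_conjTranspose_mul_self Z).trace_nonneg
    rwa [hZZ, Complex.zero_le_real] at this
  have hr1 : r ^ 2 = 1 := by nlinarith
  refine ⟨trace_conjTranspose_mul_self_eq_zero_iff.1 ?_, hr1⟩
  rw [hZZ, hr1]
  simp

lemma conj_couplingMatrix_eq {Y : Matrix (Fin m) (Fin m) ℂ} (hY : ∀ k, Y k k = 0) {c : ℂ}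
    (hc : U * couplingMatrix μ * Uᴴ = padLast Y + c • couplingMatrix μ) :
    U * couplingMatrix μ * Uᴴ = c • couplingMatrix μ ∧ (c = 1 ∨ c = -1) := by
  obtain ⟨r, rfl⟩ := hμ.exists_real_of_conj_eq hc
  obtain ⟨hZ, hr⟩ := hμ.padLast_eq_zero_of_conj_eq hU hY hc (hμ.one_le_sq_of_conj_eq hU hc)
  refine ⟨by rw [hc, hZ, zero_add], ?_⟩
  rw [← sq_eq_one_iff]
  exact_mod_cast hr

section Commuting

variable {c : ℂ} (hc : U * couplingMatrix μ * Uᴴ = c • couplingMatrix μ) (hc1 : c = 1 ∨ c = -1)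
include hc hc1

lemma apply_eq_zero_of_sqWeight_ne {k l : Fin (m + 1)} (hkl : sqWeight μ k ≠ sqWeight μ l) :
    U k l = 0 := by
  have hsq :
      U * (couplingMatrix μ * couplingMatrix μ) * Uᴴ = couplingMatrix μ * couplingMatrix μ := by
    rw [← conj_mul_conj hU, hc, smul_mul_smul_comm, ← sq c, sq_eq_one_iff.2 hc1, one_smul]
  refine apply_eq_zero_of_mul_diagonal_eq (d := fun k => (sqWeight μ k : ℂ)) ?_
    (by exact_mod_cast hkl)
  rw [← hμ.couplingMatrix_mul_self]
  exact mul_eq_mul_of_conj_eq hU hsq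

lemma eq_zero_or_last_iff_of_apply_ne_zero {k l : Fin (m + 1)} (hkl : U k l ≠ 0) :
    (k = 0 ∨ k = Fin.last m) ↔ (l = 0 ∨ l = Fin.last m) := by
  rw [← hμ.sqWeight_eq_two_iff, ← hμ.sqWeight_eq_two_iff,
    not_imp_comm.1 (hμ.apply_eq_zero_of_sqWeight_ne hU hc hc1) hkl]

lemma coeff_eq_zero_of_conj_padLast_eq {Y y : Matrix (Fin m) (Fin m) ℂ} (hY : ∀ k, Y k k = 0)
    {b : ℂ} (h : U * padLast Y * Uᴴ = padLast y + b • couplingMatrix μ) : b = 0 := by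
  have hend : ∀ j, U (Fin.last m) j ≠ 0 → j = 0 ∨ j = Fin.last m := fun j hj =>
    (hμ.eq_zero_or_last_iff_of_apply_ne_zero hU hc hc1 hj).1 (Or.inr rfl)
  have := conj_apply_self_eq_zero (i := Fin.last m) (M := padLast Y) fun j l hj hl => by
    rcases hend j hj with rfl | rfl
    · rcases hend l hl with rfl | rfl
      · exact padLast_apply_self hY 0
      · exact padLast_last_right Y 0
    · exact padLast_last_left Y l
  simpa [h, hμ.couplingMatrix_last_last] using this

lemma apply_zero_mul_star_eq_zero [NeZero m] {Y y : Matrix (Fin m) (Fin m) ℂ}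
    (h : U * padLast Y * Uᴴ = padLast y) (k : Fin m) :
    Y k 0 * star (U (Fin.last m) 0) = 0 := by
  have h' : padLast Y * Uᴴ = Uᴴ * padLast y := by
    rw [← h, ← mul_assoc, ← mul_assoc, ← star_eq_conjTranspose, Unitary.star_mul_self_of_mem hU,
      one_mul]
  have := congr_fun₂ h' k.castSucc (Fin.last m)
  rw [mul_apply, Finset.sum_eq_single 0] at this
  · rw [← Fin.castSucc_zero', padLast_castSucc_castSucc, conjTranspose_apply] at this
    simpa [mul_apply] using this
  · intro j _ hj0
    by_cases hj : U (Fin.last m) j = 0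
    · simp [hj]
    · rcases (hμ.eq_zero_or_last_iff_of_apply_ne_zero hU hc hc1 hj).1 (Or.inr rfl) with rfl | rfl
      · exact absurd rfl hj0
      · simp
  · simp

end Commuting

lemma coeff_eq_one {c : ℂ} (hc : U * couplingMatrix μ * Uᴴ = c • couplingMatrix μ)
    (hrow : ∀ j, j ≠ Fin.last m → U (Fin.last m) j = 0) : c = 1 := by
  have hnorm : Complex.normSq (U (Fin.last m) (Fin.last m)) = 1 := by
    rw [← sum_normSq_apply_eq_one hU (Fin.last m),
      Finset.sum_eq_single (Fin.last m) (fun j _ hj => by simp [hrow j hj]) (by simp)]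
  have := congr_fun₂ hc (Fin.last m) (Fin.last m)
  rw [mul_apply, Finset.sum_eq_single (Fin.last m) (fun j _ hj => by simp [hrow j hj]) (by simp),
    mul_apply, Finset.sum_eq_single (Fin.last m) (fun j _ hj => by simp [hrow j hj]) (by simp)]
    at this
  simp only [hμ.couplingMatrix_last_last, mul_one, Matrix.smul_apply, smul_eq_mul,
    conjTranspose_apply, RCLike.star_def, Complex.mul_conj, hnorm] at this
  exact_mod_cast this.symm

lemma isDiag_of_conj_eq (hc : U * couplingMatrix μ * Uᴴ = couplingMatrix μ)
    (hL0 : U (Fin.last m) 0 = 0) : U.IsDiag ∧ U 0 0 = U (Fin.last m) (Fin.last m) := by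
  have hcomm : ∀ k l, (U * couplingMatrix μ) k l = (couplingMatrix μ * U) k l := fun k l => by
    rw [mul_eq_mul_of_conj_eq hU hc]
  have hend := @hμ.eq_zero_or_last_iff_of_apply_ne_zero _ _ _ hU 1 (by rwa [one_smul]) (Or.inl rfl)
  have h0L : U 0 (Fin.last m) = 0 := by
    have := hcomm 0 0
    simp only [mul_couplingMatrix_apply, couplingMatrix_mul_apply, hμ.zero_ne_last, hL0] at this
    simpa [mul_comm] using this
  have h00 : U 0 0 = U (Fin.last m) (Fin.last m) := by
    simpa [mul_couplingMatrix_apply, couplingMatrix_mul_apply, hμ.ne_zero, hL0, hμ.apply_last,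
      eq_comm] using hcomm (Fin.last m) 0
  refine ⟨fun k l hkl => show U k l = 0 from ?_, h00⟩
  by_contra hne
  by_cases hk : k = 0 ∨ k = Fin.last m
  · have hl := (hend hne).1 hk
    rcases hk with rfl | rfl <;> rcases hl with rfl | rfl <;> simp_all
  · have hl : ¬(l = 0 ∨ l = Fin.last m) := fun hl => hk ((hend hne).2 hl)
    push Not at hk hl
    have := hcomm k l
    simp only [mul_couplingMatrix_apply, couplingMatrix_mul_apply, hk.1, hk.2, hl.1, hl.2,
      if_false, add_zero] at this
    have hμkl : (μ l : ℂ) = μ k := mul_left_cancel₀ hne (by rw [this, mul_comm])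
    exact hkl (hμ.injective (by exact_mod_cast hμkl.symm))

end Rigidity

end IsAdmissibleWeight

end CouplingMatrix

def extendFamily {d : ℕ} (Y : Fin d → Matrix (Fin m) (Fin m) ℂ) (μ : Fin (m + 1) → ℤ) :
    Fin (d + 1) → Matrix (Fin (m + 1)) (Fin (m + 1)) ℂ :=
  Fin.snoc (fun i => padLast (Y i)) (couplingMatrix μ)

section ExtendFamily

variable {d : ℕ} {Y : Fin d → Matrix (Fin m) (Fin m) ℂ} {μ : Fin (m + 1) → ℤ}

lemma mem_span_extendFamily {x : Matrix (Fin (m + 1)) (Fin (m + 1)) ℂ} :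
    x ∈ Submodule.span ℂ (Set.range (extendFamily Y μ)) ↔
      ∃ y ∈ Submodule.span ℂ (Set.range Y), ∃ c : ℂ, x = padLast y + c • couplingMatrix μ := by
  rw [extendFamily, Fin.range_snoc, Submodule.mem_span_insert, Set.range_comp' padLast Y,
    Submodule.span_image]
  simp only [Submodule.mem_map]
  constructor
  · rintro ⟨c, _, ⟨y, hy, rfl⟩, rfl⟩
    exact ⟨y, hy, c, add_comm _ _⟩
  · rintro ⟨y, hy, c, rfl⟩
    exact ⟨c, _, ⟨y, hy, rfl⟩, add_comm _ _⟩

@[simp]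
lemma extendFamily_castSucc (i : Fin d) : extendFamily Y μ i.castSucc = padLast (Y i) := by
  simp [extendFamily]

@[simp]
lemma extendFamily_last : extendFamily Y μ (Fin.last d) = couplingMatrix μ := by
  simp [extendFamily]

lemma isHermitian_extendFamily (hY : ∀ i, (Y i).IsHermitian) (j : Fin (d + 1)) :
    (extendFamily Y μ j).IsHermitian := by
  induction j using Fin.lastCases with
  | last => simpa using couplingMatrix_isHermitian μ
  | cast i => simpa using isHermitian_padLast (hY i)

lemma trace_extendFamily (hμ : IsAdmissibleWeight μ) (hsum : ∑ k, μ k = 0)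
    (hY : ∀ i k, Y i k k = 0) (j : Fin (d + 1)) : (extendFamily Y μ j).trace = 0 := by
  induction j using Fin.lastCases with
  | last => simpa [hμ.trace_couplingMatrix] using congrArg ((↑) : ℤ → ℂ) hsum
  | cast i => simpa using trace_padLast (hY i)

lemma linearIndependent_extendFamily (hμ : IsAdmissibleWeight μ) (hY : LinearIndependent ℂ Y) :
    LinearIndependent ℂ (extendFamily Y μ) := by
  refine (hY.map' padLast (LinearMap.ker_eq_bot.2 padLast_injective)).finSnoc fun h => ?_
  rw [Set.range_comp, Submodule.span_image] at h
  obtain ⟨y, -, hy⟩ := h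
  simpa [hμ.couplingMatrix_last_last] using congr_fun₂ hy (Fin.last m) (Fin.last m)

end ExtendFamily

theorem IsAdmissibleWeight.eq_smul_one_of_conj_mem {μ : Fin (m + 1) → ℤ}
    (hμ : IsAdmissibleWeight μ) (hm : 1 < m) {d : ℕ} {Y : Fin d → Matrix (Fin m) (Fin m) ℂ}
    (hherm : ∀ i, (Y i).IsHermitian) (hdiag : ∀ i k, Y i k k = 0)
    (hY : HasTrivialDiagonalStabilizer Y) {U : Matrix (Fin (m + 1)) (Fin (m + 1)) ℂ}
    (hU : U ∈ unitaryGroup (Fin (m + 1)) ℂ)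
    (hV : ∀ j, U * extendFamily Y μ j * Uᴴ ∈ Submodule.span ℂ (Set.range (extendFamily Y μ))) :
    ∃ c : ℂ, U = c • (1 : Matrix (Fin (m + 1)) (Fin (m + 1)) ℂ) := by
  have : NeZero m := ⟨by omega⟩
  obtain ⟨y, hy, c, hc⟩ := mem_span_extendFamily.1 (hV (Fin.last d))
  rw [extendFamily_last] at hc
  obtain ⟨hcA, hc1⟩ := hμ.conj_couplingMatrix_eq hU (apply_self_eq_zero_of_mem_span hdiag hy) hc
  have hmem : ∀ i, ∃ y ∈ Submodule.span ℂ (Set.range Y), U * padLast (Y i) * Uᴴ = padLast y := by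
    intro i
    obtain ⟨y, hy, b, hb⟩ := mem_span_extendFamily.1 (hV i.castSucc)
    rw [extendFamily_castSucc] at hb
    obtain rfl := hμ.coeff_eq_zero_of_conj_padLast_eq hU hcA hc1 (hdiag i) hb
    exact ⟨y, hy, by simpa using hb⟩
  have hL0 : U (Fin.last m) 0 = 0 := by
    by_contra hne
    obtain ⟨i, k, hik⟩ := hY.exists_apply_ne_zero hherm (p := 0) (q := ⟨1, hm⟩)
      (by simp [Fin.ext_iff])
    obtain ⟨y, -, hy⟩ := hmem i
    simpa [hik, hne] using hμ.apply_zero_mul_star_eq_zero hU hcA hc1 hy k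
  have hrow : ∀ j, j ≠ Fin.last m → U (Fin.last m) j = 0 := fun j hj => by
    by_contra hne
    rcases (hμ.eq_zero_or_last_iff_of_apply_ne_zero hU hcA hc1 hne).1 (Or.inr rfl) with rfl | rfl
    exacts [hne hL0, hj rfl]
  obtain rfl := hμ.coeff_eq_one hU hcA hrow
  obtain ⟨hUdiag, h0L⟩ := hμ.isDiag_of_conj_eq hU (by rwa [one_smul] at hcA) hL0
  exact eq_smul_one_of_isDiag hY hU hUdiag h0L hmem

theorem trivial_stabilizer_inductive_step_general
    (n d : ℕ) (hn : 3 ≤ n)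
    (hY : ∃ Y : Fin d → Matrix (Fin (n - 1)) (Fin (n - 1)) ℂ,
      LinearIndependent ℂ Y ∧ (∀ i, (Y i).IsHermitian) ∧ (∀ i k, Y i k k = 0) ∧
      ∀ D : Matrix (Fin (n - 1)) (Fin (n - 1)) ℂ,
        (∀ k l, k ≠ l → D k l = 0) → (∀ k, ‖D k k‖ = 1) →
        (fun x => D * x * Dᴴ) ''
            (Submodule.span ℂ (Set.range Y) : Set (Matrix (Fin (n - 1)) (Fin (n - 1)) ℂ))
          = (Submodule.span ℂ (Set.range Y) : Set (Matrix (Fin (n - 1)) (Fin (n - 1)) ℂ)) →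
        ∃ c : ℂ, D = c • (1 : Matrix (Fin (n - 1)) (Fin (n - 1)) ℂ)) :
    ∃ X : Fin (d + 1) → Matrix (Fin n) (Fin n) ℂ,
      LinearIndependent ℂ X ∧ (∀ i, (X i).IsHermitian) ∧ (∀ i, (X i).trace = 0) ∧
      ∀ U : Matrix (Fin n) (Fin n) ℂ, U ∈ Matrix.unitaryGroup (Fin n) ℂ →
        (fun x => U * x * Uᴴ) ''
            (Submodule.span ℂ (Set.range X) : Set (Matrix (Fin n) (Fin n) ℂ))
          = (Submodule.span ℂ (Set.range X) : Set (Matrix (Fin n) (Fin n) ℂ)) →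
        ∃ c : ℂ, U = c • (1 : Matrix (Fin n) (Fin n) ℂ) := by
  obtain ⟨Y, hind, hherm, hdiag, hrig⟩ := hY
  obtain ⟨m, rfl⟩ : ∃ m, n = m + 1 := ⟨n - 1, by omega⟩
  have hm : 3 ≤ m := three_le_of_hasTrivialDiagonalStabilizer hrig hdiag (by omega)
  obtain ⟨μ, hμ, hsum⟩ := exists_isAdmissibleWeight hm
  refine ⟨extendFamily Y μ, linearIndependent_extendFamily hμ hind, isHermitian_extendFamily hherm,
    trace_extendFamily hμ hsum hdiag, fun U hU himg => ?_⟩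
  refine hμ.eq_smul_one_of_conj_mem (by omega) hherm hdiag hrig hU fun j => ?_
  rw [← SetLike.mem_coe, ← himg]
  exact Set.mem_image_of_mem _ (Submodule.subset_span ⟨j, rfl⟩)

/-- Inductive step: if there is a linearly independent `d`-tuple of Hermitian
`(n-1) × (n-1)` matrices with zero diagonal whose span is preserved under conjugation only
by scalar diagonal unitaries, then there is a linearly independent `(d+1)`-tuple of traceless
Hermitian `n × n` matrices whose span is preserved under conjugation only by scalar
unitaries. -/
theorem trivial_stabilizer_inductive_step
    (n d : ℕ) (hn : 3 ≤ n) (hd : 1 ≤ d)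
    (hY : ∃ Y : Fin d → Matrix (Fin (n - 1)) (Fin (n - 1)) ℂ,
      LinearIndependent ℂ Y ∧ (∀ i, (Y i).IsHermitian) ∧ (∀ i k, Y i k k = 0) ∧
      ∀ D : Matrix (Fin (n - 1)) (Fin (n - 1)) ℂ,
        (∀ k l, k ≠ l → D k l = 0) → (∀ k, ‖D k k‖ = 1) →
        (fun x => D * x * Dᴴ) ''
            (Submodule.span ℂ (Set.range Y) : Set (Matrix (Fin (n - 1)) (Fin (n - 1)) ℂ))
          = (Submodule.span ℂ (Set.range Y) : Set (Matrix (Fin (n - 1)) (Fin (n - 1)) ℂ)) →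
        ∃ c : ℂ, D = c • (1 : Matrix (Fin (n - 1)) (Fin (n - 1)) ℂ)) :
    ∃ X : Fin (d + 1) → Matrix (Fin n) (Fin n) ℂ,
      LinearIndependent ℂ X ∧ (∀ i, (X i).IsHermitian) ∧ (∀ i, (X i).trace = 0) ∧
      ∀ U : Matrix (Fin n) (Fin n) ℂ, U ∈ Matrix.unitaryGroup (Fin n) ℂ →
        (fun x => U * x * Uᴴ) ''
            (Submodule.span ℂ (Set.range X) : Set (Matrix (Fin n) (Fin n) ℂ))
          = (Submodule.span ℂ (Set.range X) : Set (Matrix (Fin n) (Fin n) ℂ)) →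
        ∃ c : ℂ, U = c • (1 : Matrix (Fin n) (Fin n) ℂ) :=
  trivial_stabilizer_inductive_step_general n d hn hY
end

section
/- Let V ⊆ Mₙ(ℂ) be a complex linear subspace admitting an orthonormal basis (A₁, …, A_m) with respect to the Frobenius inner product consisting of Hermitian matrices. If the Hermitian matrix ∑ᵢ Aᵢ² has n pairwise distinct eigenvalues, then any two unitary matrices U, W ∈ Mₙ(ℂ) satisfying U V Uᴴ = V and W V Wᴴ = V commute: U·W = W·U. In particular, the automorphism group of the quantum graph V is abelian whenever its degree matrix has simple spectrum. -/
/-!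
Conjugation by a unitary `U` with `U V Uᴴ = V` carries the orthonormal basis `(Aᵢ)` of `V` to
another orthonormal basis `(U Aᵢ Uᴴ)`. Two orthonormal bases differ by a unitary coefficient
matrix, which cancels in `∑ᵢ Aᵢ Aᵢᴴ`; hence this degree matrix is fixed by conjugation with `U`,
i.e. commutes with `U`. Diagonalising the degree matrix, whose eigenvalues are distinct, every
matrix commuting with it becomes diagonal, so any two such matrices commute.
-/

open Matrix

namespace Matrix

section Diagonal

variable {n : Type*} [Fintype n] [DecidableEq n]

theorem eq_diagonal_diag_of_commute_diagonal {R : Type*} [CommRing R] [NoZeroDivisors R]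
    {d : n → R} (hd : Function.Injective d) {M : Matrix n n R} (hM : Commute M (diagonal d)) :
    M = diagonal M.diag := by
  ext i j
  rcases eq_or_ne i j with rfl | hij
  · simp
  · have h := congr_fun₂ hM.eq i j
    rw [mul_diagonal, diagonal_mul] at h
    have hdij : d j - d i ≠ 0 := sub_ne_zero.mpr fun h' => hij (hd h').symm
    rw [diagonal_apply_ne _ hij]
    exact (mul_eq_zero.mp (by linear_combination h : M i j * (d j - d i) = 0)).resolve_right hdij

theorem commute_of_commute_diagonal {R : Type*} [CommRing R] [NoZeroDivisors R]
    {d : n → R} (hd : Function.Injective d) {X Y : Matrix n n R}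
    (hX : Commute X (diagonal d)) (hY : Commute Y (diagonal d)) : Commute X Y := by
  rw [eq_diagonal_diag_of_commute_diagonal hd hX, eq_diagonal_diag_of_commute_diagonal hd hY]
  exact commute_diagonal _ _

theorem IsHermitian.commute_of_injective_eigenvalues {𝕜 : Type*} [RCLike 𝕜]
    {S X Y : Matrix n n 𝕜} (hS : S.IsHermitian) (hinj : Function.Injective hS.eigenvalues)
    (hX : Commute X S) (hY : Commute Y S) : Commute X Y := by
  obtain ⟨φ, hφ⟩ : ∃ φ : Matrix n n 𝕜 ≃⋆ₐ[𝕜] Matrix n n 𝕜,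
      S = φ (diagonal (RCLike.ofReal ∘ hS.eigenvalues)) := ⟨_, hS.spectral_theorem⟩
  have hd : Function.Injective (RCLike.ofReal ∘ hS.eigenvalues : n → 𝕜) :=
    RCLike.ofReal_injective.comp hinj
  rw [hφ, ← commute_map_iff (f := φ.symm) φ.symm.injective, StarAlgEquiv.symm_apply_apply]
    at hX hY
  exact (commute_map_iff (f := φ.symm) φ.symm.injective).mp (commute_of_commute_diagonal hd hX hY)

end Diagonal

section Orthonormal

variable {R n ι : Type*} [CommRing R] [StarRing R] [Fintype n] [Fintype ι]
  {A : ι → Matrix n n R}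

theorem sum_sum_smul_mul_conjTranspose_sum_smul (c : Matrix ι ι R) :
    ∑ i, (∑ j, c i j • A j) * (∑ j, c i j • A j)ᴴ =
      ∑ j, ∑ l, (cᴴ * c) l j • (A j * (A l)ᴴ) := by
  simp only [conjTranspose_sum, conjTranspose_smul, Finset.sum_mul_sum, smul_mul_smul_comm,
    mul_apply, conjTranspose_apply, Finset.sum_smul]
  rw [Finset.sum_comm]
  refine Finset.sum_congr rfl fun j _ => ?_
  rw [Finset.sum_comm]
  simp only [mul_comm]

variable [DecidableEq ι]

theorem eq_sum_trace_smul_of_mem_span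
    (hA : ∀ i j, ((A i)ᴴ * A j).trace = if i = j then 1 else 0)
    {X : Matrix n n R} (hX : X ∈ Submodule.span R (Set.range A)) :
    X = ∑ j, ((A j)ᴴ * X).trace • A j := by
  obtain ⟨c, rfl⟩ := (Submodule.mem_span_range_iff_exists_fun R).mp hX
  refine Finset.sum_congr rfl fun j _ => ?_
  simp [Matrix.mul_sum, trace_sum, hA]

theorem trace_conjTranspose_sum_smul_mul_sum_smul
    (hA : ∀ i j, ((A i)ᴴ * A j).trace = if i = j then 1 else 0) (c d : ι → R) :
    ((∑ j, c j • A j)ᴴ * ∑ j, d j • A j).trace = ∑ j, star (c j) * d j := by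
  simp [conjTranspose_sum, Finset.sum_mul_sum, trace_sum, hA, mul_comm]

theorem sum_mul_conjTranspose_eq_of_orthonormal {B : ι → Matrix n n R}
    (hA : ∀ i j, ((A i)ᴴ * A j).trace = if i = j then 1 else 0)
    (hB : ∀ i j, ((B i)ᴴ * B j).trace = if i = j then 1 else 0)
    (hBA : ∀ i, B i ∈ Submodule.span R (Set.range A)) :
    ∑ i, B i * (B i)ᴴ = ∑ i, A i * (A i)ᴴ := by
  set c : Matrix ι ι R := of fun i j => ((A j)ᴴ * B i).trace
  have hBc : ∀ i, B i = ∑ j, c i j • A j := fun i => eq_sum_trace_smul_of_mem_span hA (hBA i)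
  have hc : c * cᴴ = 1 := by
    ext k i
    calc (c * cᴴ) k i = ((B i)ᴴ * B k).trace := by
          rw [hBc i, hBc k, trace_conjTranspose_sum_smul_mul_sum_smul hA, mul_apply]
          simp only [conjTranspose_apply, mul_comm]
      _ = (1 : Matrix ι ι R) k i := by rw [hB, one_apply]; simp only [eq_comm]
  -- `c` is square, so the right inverse `cᴴ` is also a left inverse.
  calc ∑ i, B i * (B i)ᴴ = ∑ i, (∑ j, c i j • A j) * (∑ j, c i j • A j)ᴴ :=
        Finset.sum_congr rfl fun i _ => by rw [← hBc i]
    _ = ∑ i, A i * (A i)ᴴ := by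
        simp [sum_sum_smul_mul_conjTranspose_sum_smul, mul_eq_one_comm.mp hc, one_apply]

end Orthonormal

theorem commute_sum_mul_conjTranspose_of_conj_mem {R n ι : Type*} [CommRing R] [StarRing R]
    [Fintype n] [DecidableEq n] [Fintype ι] [DecidableEq ι]
    {V : Submodule R (Matrix n n R)} {A : ι → Matrix n n R}
    (hmem : ∀ i, A i ∈ V) (hspan : V ≤ Submodule.span R (Set.range A))
    (hA : ∀ i j, ((A i)ᴴ * A j).trace = if i = j then 1 else 0)
    {U : Matrix n n R} (hU : U ∈ unitaryGroup n R) (hUV : ∀ x ∈ V, U * x * Uᴴ ∈ V) :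
    Commute U (∑ i, A i * (A i)ᴴ) := by
  set φ := Unitary.conjStarAlgAut R (Matrix n n R) ⟨U, hU⟩
  have hφ : ∀ x, φ x = U * x * Uᴴ := fun _ => rfl
  have htrace : ∀ x, (φ x).trace = x.trace := fun x => by
    rw [hφ, trace_mul_cycle, ← star_eq_conjTranspose, Unitary.star_mul_self_of_mem hU, one_mul]
  have hφA : ∀ i j, ((φ (A i))ᴴ * φ (A j)).trace = if i = j then 1 else 0 := fun i j => by
    rw [← star_eq_conjTranspose, ← map_star, ← map_mul, htrace, star_eq_conjTranspose, hA]
  have hsum := sum_mul_conjTranspose_eq_of_orthonormal hA hφA fun i => hspan (hUV _ (hmem i))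
  simp only [← star_eq_conjTranspose, ← map_star, ← map_mul, ← map_sum] at hsum
  exact (commute_unitary_iff_star_right_conjugate hU).mpr hsum

end Matrix

/-- If a subspace `V ⊆ Mₙ(ℂ)` has a Frobenius-orthonormal basis of Hermitian matrices `Aᵢ`
and the matrix `∑ᵢ Aᵢ²` has `n` pairwise distinct eigenvalues, then any two unitaries
preserving `V` under conjugation commute (the automorphism group of the quantum graph `V`
is abelian whenever the degree matrix has simple spectrum). -/
theorem commute_of_simple_spectrum_degree_matrix
    (n m : ℕ) (V : Submodule ℂ (Matrix (Fin n) (Fin n) ℂ))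
    (A : Fin m → Matrix (Fin n) (Fin n) ℂ)
    (hmem : ∀ i, A i ∈ V)
    (hspan : V ≤ Submodule.span ℂ (Set.range A))
    (horth : ∀ i j, ((A i)ᴴ * A j).trace = if i = j then 1 else 0)
    (hherm : ∀ i, (A i).IsHermitian)
    (hS : (∑ i, A i ^ 2).IsHermitian)
    (hsimple : Function.Injective hS.eigenvalues)
    (U W : Matrix (Fin n) (Fin n) ℂ)
    (hU : U ∈ Matrix.unitaryGroup (Fin n) ℂ) (hW : W ∈ Matrix.unitaryGroup (Fin n) ℂ)
    (hUV : (fun x => U * x * Uᴴ) '' (V : Set (Matrix (Fin n) (Fin n) ℂ))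
      = (V : Set (Matrix (Fin n) (Fin n) ℂ)))
    (hWV : (fun x => W * x * Wᴴ) '' (V : Set (Matrix (Fin n) (Fin n) ℂ))
      = (V : Set (Matrix (Fin n) (Fin n) ℂ))) :
    U * W = W * U := by
  have hdegree : ∑ i, A i ^ 2 = ∑ i, A i * (A i)ᴴ := by simp only [sq, (hherm _).eq]
  have hcommute {X : Matrix (Fin n) (Fin n) ℂ} (hX : X ∈ unitaryGroup (Fin n) ℂ)
      (hXV : (fun x => X * x * Xᴴ) '' (V : Set (Matrix (Fin n) (Fin n) ℂ)) = V) :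
      Commute X (∑ i, A i ^ 2) :=
    hdegree ▸ commute_sum_mul_conjTranspose_of_conj_mem hmem hspan horth hX
      fun x hx => hXV.subset (Set.mem_image_of_mem _ hx)
  exact (hS.commute_of_injective_eigenvalues hsimple (hcommute hU hUV) (hcommute hW hWV)).eq
end

section
/- Let V ⊆ Mₙ(ℂ) be a complex linear subspace with an orthonormal basis (A₁, …, A_m) with respect to the Frobenius inner product. If a unitary matrix U ∈ Mₙ(ℂ) satisfies U V Uᴴ = V, then U commutes with the matrix ∑ᵢ Aᵢ Aᵢᴴ: U · (∑ᵢ Aᵢ Aᵢᴴ) = (∑ᵢ Aᵢ Aᵢᴴ) · U. (In other words, every unitary automorphism of the quantum graph V commutes with its degree matrix D = n·∑ᵢ Aᵢ Aᵢᴴ.) -/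
/-!
Conjugating by `U` maps the Frobenius-orthonormal basis `(Aᵢ)` of `V` to another orthonormal
basis `(U Aᵢ Uᴴ)` of `V`, and `∑ᵢ Aᵢ Aᵢᴴ` does not depend on the orthonormal basis: two of them
differ by a unitary change of coefficients `C`, and `Cᴴ C = 1` makes the cross terms cancel.
Hence `U (∑ᵢ Aᵢ Aᵢᴴ) Uᴴ = ∑ᵢ Aᵢ Aᵢᴴ`.
-/

open Matrix

namespace Matrix

variable {ι κ p q R : Type*} [Fintype p] [Fintype q]

def FrobeniusOrthonormal [CommSemiring R] [StarRing R] [DecidableEq ι]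
    (A : ι → Matrix p q R) : Prop :=
  ∀ i j, ((A i)ᴴ * A j).trace = if i = j then 1 else 0

section CommSemiring

variable [CommSemiring R] [StarRing R] [DecidableEq ι]

omit [Fintype p] in
theorem sum_mul_conjTranspose_sum_smul_of_conjTranspose_mul_self_eq_one [Fintype ι]
    (A : ι → Matrix p q R) (C : Matrix ι ι R) (hC : Cᴴ * C = 1) :
    ∑ i, (∑ k, C i k • A k) * (∑ k, C i k • A k)ᴴ = ∑ k, A k * (A k)ᴴ := by
  have hcoeff : ∀ l k, ∑ i, star (C i l) * C i k = (1 : Matrix ι ι R) l k := fun l k => by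
    rw [← hC, mul_apply]
    rfl
  calc ∑ i, (∑ k, C i k • A k) * (∑ k, C i k • A k)ᴴ
      = ∑ l, ∑ k, (∑ i, star (C i l) * C i k) • (A k * (A l)ᴴ) := by
        simp only [conjTranspose_sum, conjTranspose_smul, Matrix.sum_mul, Matrix.mul_sum,
          Matrix.smul_mul, Matrix.mul_smul, Finset.smul_sum, smul_smul, Finset.sum_smul]
        rw [Finset.sum_comm]
        exact Finset.sum_congr rfl fun l _ => Finset.sum_comm
    _ = ∑ k, A k * (A k)ᴴ := by
        simp only [hcoeff, one_apply, ite_smul, one_smul, zero_smul, Finset.sum_ite_eq,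
          Finset.mem_univ, if_true]

theorem FrobeniusOrthonormal.trace_conjTranspose_sum_smul_mul_sum_smul [Fintype ι] {A : ι → Matrix p q R}
    (hA : FrobeniusOrthonormal A) (C : Matrix κ ι R) (i j : κ) :
    ((∑ k, C i k • A k)ᴴ * ∑ k, C j k • A k).trace = (C * Cᴴ) j i := by
  simp only [conjTranspose_sum, conjTranspose_smul, Matrix.sum_mul, Matrix.mul_sum,
    Matrix.smul_mul, Matrix.mul_smul, Finset.smul_sum, smul_smul, trace_sum, trace_smul, hA _ _,
    smul_eq_mul, mul_ite, mul_one, mul_zero, Finset.sum_ite_eq', Finset.mem_univ, if_true, mul_apply, conjTranspose_apply]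

variable {U : Matrix p p R}

theorem conjTranspose_conj (X : Matrix p p R) : (U * X * Uᴴ)ᴴ = U * Xᴴ * Uᴴ := by
  simp only [conjTranspose_mul, conjTranspose_conjTranspose, Matrix.mul_assoc]

variable [DecidableEq p]

theorem conj_mul_conj (hU : Uᴴ * U = 1) (X Y : Matrix p p R) :
    U * X * Uᴴ * (U * Y * Uᴴ) = U * (X * Y) * Uᴴ := by
  simp only [Matrix.mul_assoc, ← Matrix.mul_assoc Uᴴ U, hU, Matrix.one_mul]

theorem trace_conj_conjTranspose (hU : Uᴴ * U = 1) (X : Matrix p p R) :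
    (U * X * Uᴴ).trace = X.trace := by
  rw [trace_mul_comm, ← Matrix.mul_assoc, hU, Matrix.one_mul]

theorem FrobeniusOrthonormal.conj (hU : Uᴴ * U = 1) {A : ι → Matrix p p R}
    (hA : FrobeniusOrthonormal A) : FrobeniusOrthonormal fun i => U * A i * Uᴴ := fun i j => by
  dsimp only
  rw [conjTranspose_conj, conj_mul_conj hU, trace_conj_conjTranspose hU, hA i j]

end CommSemiring

theorem FrobeniusOrthonormal.sum_mul_conjTranspose_eq [Fintype ι] [CommRing R] [StarRing R]
    [DecidableEq ι]
    {A B : ι → Matrix p q R} (hA : FrobeniusOrthonormal A) (hB : FrobeniusOrthonormal B)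
    (hBA : ∀ i, B i ∈ Submodule.span R (Set.range A)) :
    ∑ i, B i * (B i)ᴴ = ∑ k, A k * (A k)ᴴ := by
  choose c hc using fun i => (Submodule.mem_span_range_iff_exists_fun R).mp (hBA i)
  set C : Matrix ι ι R := of c
  have hCC : C * Cᴴ = 1 := by
    ext i j
    rw [← hA.trace_conjTranspose_sum_smul_mul_sum_smul C j i]
    simp only [C, of_apply, hc, hB j i, one_apply, eq_comm]
  simp_rw [← hc]
  exact sum_mul_conjTranspose_sum_smul_of_conjTranspose_mul_self_eq_one A C
    (mul_eq_one_comm.mp hCC)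

end Matrix

/-- Every unitary preserving (under conjugation) a subspace `V ⊆ Mₙ(ℂ)` with
Frobenius-orthonormal basis `(Aᵢ)` commutes with `∑ᵢ Aᵢ Aᵢᴴ` (equivalently, with the degree
matrix `D = n ∑ᵢ Aᵢ Aᵢᴴ` of the quantum graph `V`). -/
theorem unitary_automorphism_commutes_with_degree_matrix
    (n m : ℕ) (V : Submodule ℂ (Matrix (Fin n) (Fin n) ℂ))
    (A : Fin m → Matrix (Fin n) (Fin n) ℂ)
    (hmem : ∀ i, A i ∈ V)
    (hspan : V ≤ Submodule.span ℂ (Set.range A))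
    (horth : ∀ i j, ((A i)ᴴ * A j).trace = if i = j then 1 else 0)
    (U : Matrix (Fin n) (Fin n) ℂ) (hU : U ∈ Matrix.unitaryGroup (Fin n) ℂ)
    (hUV : (fun x => U * x * Uᴴ) '' (V : Set (Matrix (Fin n) (Fin n) ℂ))
      = (V : Set (Matrix (Fin n) (Fin n) ℂ))) :
    U * (∑ i, A i * (A i)ᴴ) = (∑ i, A i * (A i)ᴴ) * U := by
  have hUU : Uᴴ * U = 1 := hU.1
  have hconj_mem : ∀ i, U * A i * Uᴴ ∈ Submodule.span ℂ (Set.range A) := fun i =>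
    hspan <| by
      rw [← SetLike.mem_coe, ← hUV]
      exact ⟨A i, hmem i, rfl⟩
  have horth' : FrobeniusOrthonormal A := horth
  have hD : U * (∑ i, A i * (A i)ᴴ) * Uᴴ = ∑ i, A i * (A i)ᴴ := calc
    _ = ∑ i, U * A i * Uᴴ * (U * A i * Uᴴ)ᴴ := by
      simp only [Matrix.mul_sum, Matrix.sum_mul, conjTranspose_conj, conj_mul_conj hUU]
    _ = ∑ i, A i * (A i)ᴴ := horth'.sum_mul_conjTranspose_eq (horth'.conj hUU) hconj_mem
  calc U * (∑ i, A i * (A i)ᴴ) = U * (∑ i, A i * (A i)ᴴ) * Uᴴ * U := by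
        rw [Matrix.mul_assoc _ Uᴴ, hUU, Matrix.mul_one]
    _ = (∑ i, A i * (A i)ᴴ) * U := by rw [hD]
end

section
/- Let n ≥ 3 and 1 ≤ d ≤ n − 2, and let Λ be an arbitrary real diagonal n×n matrix. Then there exist traceless real diagonal n×n matrices X₁, …, X_d, orthonormal with respect to the Frobenius inner product, such that all n diagonal entries of the matrix D + Λ are pairwise distinct, where D := 1 + n·∑ᵢ Xᵢ² is the degree matrix of the operator system span(1, X₁, …, X_d). -/
/-!
Identify diagonal matrices with vectors in `ℝⁿ`; the Frobenius product becomes the dot product.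
Take `u = n e₀ - 𝟙` and a vector `w ⊥ 𝟙` with injective entries and `w₀ = 0`, so that `u ⊥ w`
and `uₖ wₖ = -wₖ` is injective in `k`. For the unit vector `v` in the direction of `u + t w`,
the equation `cₖ + n vₖ² = cₗ + n vₗ²` becomes, after clearing `‖u + t w‖² = ‖u‖² + t² ‖w‖²`,
a quadratic in `t` whose linear coefficient `2n (uₖ wₖ - uₗ wₗ)` is nonzero, so all but finitely
many `t` separate every pair of entries. The other `d - 1` vectors are chosen orthonormal and
orthogonal to `𝟙, u, w` (there is room since `d + 2 ≤ n`), so they do not depend on `t`.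
-/

open Matrix Module Polynomial
open scoped InnerProductSpace

theorem Polynomial.exists_forall_eval_ne_zero {R ι : Type*} [CommRing R] [IsDomain R]
    [Infinite R] (s : Finset ι) (p : ι → R[X]) (hp : ∀ i ∈ s, p i ≠ 0) :
    ∃ t : R, ∀ i ∈ s, (p i).eval t ≠ 0 := by
  have hprod : ∏ i ∈ s, p i ≠ 0 := Finset.prod_ne_zero_iff.mpr hp
  obtain ⟨t, ht⟩ : ∃ t, (∏ i ∈ s, p i).eval t ≠ 0 := by
    by_contra! h
    exact hprod (Polynomial.funext fun t => by simpa using h t)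
  rw [eval_prod, Finset.prod_ne_zero_iff] at ht
  exact ⟨t, ht⟩

theorem exists_forall_quadratic_ne_zero {R ι : Type*} [CommRing R] [IsDomain R] [Infinite R]
    (s : Finset ι) (a b c : ι → R) (hb : ∀ i ∈ s, b i ≠ 0) :
    ∃ t : R, ∀ i ∈ s, a i * t ^ 2 + b i * t + c i ≠ 0 := by
  have hcoeff (i : ι) : (C (a i) * X ^ 2 + C (b i) * X + C (c i)).coeff 1 = b i := by
    simp [coeff_X_pow, coeff_C]
  obtain ⟨t, ht⟩ := exists_forall_eval_ne_zero s
    (fun i => C (a i) * X ^ 2 + C (b i) * X + C (c i))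
    fun i hi h => hb i hi (by rw [← hcoeff i, h, coeff_zero])
  exact ⟨t, fun i hi => by simpa using ht i hi⟩

section InnerProductSpace

variable {𝕜 E : Type*} [RCLike 𝕜] [NormedAddCommGroup E] [InnerProductSpace 𝕜 E]

theorem Submodule.exists_orthonormal_mem_orthogonal [FiniteDimensional 𝕜 E]
    (K : Submodule 𝕜 E) {m : ℕ} (hm : m + finrank 𝕜 K ≤ finrank 𝕜 E) :
    ∃ y : Fin m → E, Orthonormal 𝕜 y ∧ ∀ i, y i ∈ Kᗮ := by
  have hmK : m ≤ finrank 𝕜 Kᗮ := by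
    have := K.finrank_add_finrank_orthogonal
    omega
  let B := stdOrthonormalBasis 𝕜 Kᗮ
  refine ⟨fun i => B (Fin.castLE hmK i), ?_, fun i => (B _).2⟩
  exact (B.orthonormal.comp _ (Fin.castLE_injective hmK)).comp_linearIsometry Kᗮ.subtypeₗᵢ

theorem Orthonormal.fin_cons {m : ℕ} {v : E} {y : Fin m → E} (hy : Orthonormal 𝕜 y)
    (hv : ‖v‖ = 1) (hvy : ∀ i, ⟪v, y i⟫_𝕜 = 0) :
    Orthonormal 𝕜 (Fin.cons v y : Fin (m + 1) → E) := by
  rw [orthonormal_iff_ite] at hy ⊢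
  intro i j
  cases i using Fin.cases <;> cases j using Fin.cases <;>
    simp [hy, hvy, inner_eq_zero_symm.mp (hvy _), inner_self_eq_norm_sq_to_K, hv,
      (Fin.succ_ne_zero _).symm]

end InnerProductSpace

namespace EuclideanSpace

theorem exists_mem_span_pair_norm_eq_one_injective {ι : Type*} [Fintype ι]
    {u w : EuclideanSpace ℝ ι} (huw : ⟪u, w⟫_ℝ = 0) (hu : u ≠ 0)
    (hinj : Function.Injective fun k => u k * w k) (c : ι → ℝ) {a : ℝ} (ha : a ≠ 0) :
    ∃ v ∈ Submodule.span ℝ {u, w}, ‖v‖ = 1 ∧ Function.Injective fun k => c k + a * v k ^ 2 := by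
  classical
  obtain ⟨t, ht⟩ := exists_forall_quadratic_ne_zero Finset.univ.offDiag
    (fun p => (c p.1 - c p.2) * ‖w‖ ^ 2 + a * (w p.1 ^ 2 - w p.2 ^ 2))
    (fun p => 2 * a * (u p.1 * w p.1 - u p.2 * w p.2))
    (fun p => (c p.1 - c p.2) * ‖u‖ ^ 2 + a * (u p.1 ^ 2 - u p.2 ^ 2))
    fun p hp => mul_ne_zero (mul_ne_zero two_ne_zero ha)
      (sub_ne_zero.mpr (hinj.ne (Finset.mem_offDiag.mp hp).2.2))
  set z := u + t • w
  have hz : ‖z‖ ^ 2 = ‖u‖ ^ 2 + t ^ 2 * ‖w‖ ^ 2 := by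
    rw [norm_add_sq_real, inner_smul_right, huw, norm_smul, mul_pow, Real.norm_eq_abs, sq_abs]
    ring
  have hz0 : ‖z‖ ≠ 0 := by
    have : 0 < ‖u‖ := norm_pos_iff.mpr hu
    intro h
    nlinarith [sq_nonneg t, sq_nonneg ‖w‖]
  have hz_mem : z ∈ Submodule.span ℝ {u, w} :=
    add_mem (Submodule.subset_span (by simp))
      (Submodule.smul_mem _ _ (Submodule.subset_span (by simp)))
  refine ⟨‖z‖⁻¹ • z, Submodule.smul_mem _ _ hz_mem,
    norm_smul_inv_norm (norm_ne_zero_iff.mp hz0), fun k l hkl => ?_⟩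
  by_contra hkl'
  apply ht (k, l) (by simp [hkl'])
  have hzk (k : ι) : z k = u k + t * w k := rfl
  simp only [PiLp.smul_apply, smul_eq_mul] at hkl
  field_simp at hkl
  rw [hzk, hzk] at hkl
  linear_combination hkl - (c k - c l) * hz

theorem exists_sum_eq_zero_inner_eq_zero_injective_mul {n : ℕ} (hn : 3 ≤ n) :
    ∃ u w : EuclideanSpace ℝ (Fin n), ∑ k, u k = 0 ∧ ∑ k, w k = 0 ∧ ⟪u, w⟫_ℝ = 0 ∧ u ≠ 0 ∧
      Function.Injective fun k => u k * w k := by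
  obtain ⟨m, rfl⟩ : ∃ m, n = m + 2 + 1 := ⟨n - 3, by omega⟩
  let u : Fin (m + 2 + 1) → ℝ := Fin.cons ((m + 2 : ℕ) : ℝ) fun _ => -1
  let w : Fin (m + 2 + 1) → ℝ :=
    Fin.snoc (fun j : Fin (m + 2) => (j : ℝ)) (-∑ j : Fin (m + 2), (j : ℝ))
  have hu : ∑ k, u k = 0 := by simp [u, Fin.sum_univ_succ]
  have hw : ∑ k, w k = 0 := by
    simp only [w, Fin.sum_univ_castSucc, Fin.snoc_castSucc, Fin.snoc_last, add_neg_cancel]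
  have huw (k : Fin (m + 2 + 1)) : u k * w k = -w k := by
    cases k using Fin.cases with
    | zero =>
      have hw0 : w 0 = 0 := by
        rw [← Fin.castSucc_zero]
        simp only [w, Fin.snoc_castSucc, Fin.val_zero, Nat.cast_zero]
      simp [hw0]
    | succ k => simp [u]
  have hw_inj : Function.Injective w := by
    refine Fin.snoc_injective_of_injective (fun i j h => Fin.ext (by exact_mod_cast h)) ?_
    rintro ⟨j, hj⟩
    have hpos : (0 : ℝ) < ∑ j : Fin (m + 2), (j : ℝ) :=
      Finset.sum_pos' (fun j _ => Nat.cast_nonneg _) ⟨1, Finset.mem_univ _, by simp⟩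
    have : (0 : ℝ) ≤ j := Nat.cast_nonneg _
    simp only at hj
    linarith
  refine ⟨WithLp.toLp 2 u, WithLp.toLp 2 w, hu, hw, ?_, ?_, ?_⟩
  · rw [EuclideanSpace.inner_toLp_toLp]
    simp [dotProduct, mul_comm, huw, hw]
  · intro h
    have := congrArg (fun v : EuclideanSpace ℝ (Fin (m + 2 + 1)) => v 0) h
    simp only [Nat.cast_add, Nat.cast_ofNat, Fin.cons_zero, PiLp.zero_apply, u] at this
    linarith
  · intro k l h
    exact hw_inj (neg_inj.mp (by simpa [huw] using h))

theorem exists_orthonormal_sum_eq_zero_injective {n d : ℕ} (hn : 3 ≤ n) (hd : d + 1 ≤ n - 2)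
    (c : Fin n → ℝ) {a : ℝ} (ha : a ≠ 0) :
    ∃ x : Fin (d + 1) → EuclideanSpace ℝ (Fin n), Orthonormal ℝ x ∧ (∀ i, ∑ k, x i k = 0) ∧
      Function.Injective fun k => c k + a * ∑ i, x i k ^ 2 := by
  obtain ⟨u, w, hu, hw, huw, hu0, huw_inj⟩ := exists_sum_eq_zero_inner_eq_zero_injective_mul hn
  let one : EuclideanSpace ℝ (Fin n) := WithLp.toLp 2 1
  have inner_one (v : EuclideanSpace ℝ (Fin n)) : ⟪one, v⟫_ℝ = ∑ k, v k := by
    simp [one, inner_eq_star_dotProduct, dotProduct]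
  let K := Submodule.span ℝ {one, u, w}
  obtain ⟨y, hy, hyK⟩ := K.exists_orthonormal_mem_orthogonal (m := d) <| by
    have : finrank ℝ K ≤ 3 := (finrank_span_le_card _).trans (by simpa using Finset.card_le_three)
    rw [finrank_euclideanSpace_fin]
    omega
  obtain ⟨v, hv, hv1, hv_inj⟩ := exists_mem_span_pair_norm_eq_one_injective huw hu0 huw_inj
    (fun k => c k + a * ∑ i, y i k ^ 2) ha
  have hvK : v ∈ K := Submodule.span_mono (Set.subset_insert _ _) hv
  have hv_one : ⟪one, v⟫_ℝ = 0 := by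
    have : Submodule.span ℝ {u, w} ≤ (ℝ ∙ one)ᗮ := by
      simp [Submodule.span_le, Set.insert_subset_iff,
        Submodule.mem_orthogonal_singleton_iff_inner_right, inner_one, hu, hw]
    exact Submodule.mem_orthogonal_singleton_iff_inner_right.mp (this hv)
  refine ⟨Fin.cons v y, hy.fin_cons hv1 fun i => K.inner_right_of_mem_orthogonal hvK (hyK i),
    fun i => ?_, ?_⟩
  · rw [← inner_one]
    cases i using Fin.cases with
    | zero => exact hv_one
    | succ i => exact K.inner_right_of_mem_orthogonal (Submodule.subset_span (by simp)) (hyK i)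
  · convert hv_inj using 1
    funext k
    simp only [Fin.sum_univ_succ, Fin.cons_zero, Fin.cons_succ]
    ring

end EuclideanSpace

theorem Matrix.trace_diagonal_transpose_mul_diagonal {ι R : Type*} [Fintype ι] [DecidableEq ι]
    [CommSemiring R] (a b : ι → R) : ((diagonal a)ᵀ * diagonal b).trace = a ⬝ᵥ b := by
  simp [dotProduct]

/-- For `1 ≤ d ≤ n - 2` and any real diagonal matrix `Λ`, there are traceless,
Frobenius-orthonormal real diagonal matrices `X₁, …, X_d` such that the diagonal matrix
`D + Λ`, where `D = 1 + n ∑ᵢ Xᵢ²` is the degree matrix of `span (1, X₁, …, X_d)`, has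
pairwise distinct diagonal entries. -/
theorem exists_diagonal_tuple_simple_degree_matrix
    (n d : ℕ) (hn : 3 ≤ n) (hd₁ : 1 ≤ d) (hd₂ : d ≤ n - 2) (Λ : Fin n → ℝ) :
    ∃ x : Fin d → (Fin n → ℝ),
      (∀ i, (Matrix.diagonal (x i)).trace = 0) ∧
      (∀ i j, ((Matrix.diagonal (x i))ᵀ * Matrix.diagonal (x j)).trace
        = if i = j then 1 else 0) ∧
      Function.Injective (fun k : Fin n =>
        (((1 : Matrix (Fin n) (Fin n) ℝ) + (n : ℝ) • ∑ i, (Matrix.diagonal (x i)) ^ 2)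
          + Matrix.diagonal Λ) k k) := by
  obtain ⟨d, rfl⟩ : ∃ d', d = d' + 1 := ⟨d - 1, by omega⟩
  obtain ⟨x, hx, hx_sum, hx_inj⟩ := EuclideanSpace.exists_orthonormal_sum_eq_zero_injective hn hd₂
    (fun k => 1 + Λ k) (a := n) (by positivity)
  refine ⟨fun i => x i, fun i => by rw [trace_diagonal, hx_sum], fun i j => ?_, ?_⟩
  · rw [trace_diagonal_transpose_mul_diagonal, ← orthonormal_iff_ite.mp hx i j]
    simp [EuclideanSpace.inner_eq_star_dotProduct, dotProduct_comm]
  · convert hx_inj using 1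
    funext k
    simp only [diagonal_pow, Matrix.add_apply, one_apply_eq, Matrix.smul_apply, Matrix.sum_apply,
      diagonal_apply_eq, Pi.pow_apply, smul_eq_mul]
    ring
end

section
/- Let Γ be a simple graph on a finite vertex set of cardinality 2m that is k-regular (every vertex has exactly k neighbors), and let the vertex set be partitioned as V′ ⊔ V″ with |V′| = |V″| = m. Let Γ′ be the graph obtained from Γ by adding one new vertex adjacent to exactly the vertices of V′, and Γ″ the graph obtained by adding one new vertex adjacent to exactly the vertices of V″. Then Γ′ and Γ″ are isospectral: the adjacency matrices of Γ′ and Γ″ have equal characteristic polynomials. -/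
open SimpleGraph

/-- The graph obtained from `G` by adding one new vertex (the `none` vertex) joined to
exactly the vertices in `S`. -/
def addVertexJoinedTo {V : Type*} (G : SimpleGraph V) (S : Set V) :
    SimpleGraph (Option V) :=
  SimpleGraph.fromRel (fun x y =>
    (∃ u v : V, x = some u ∧ y = some v ∧ G.Adj u v) ∨
    (x = none ∧ ∃ v ∈ S, y = some v))

section Aux

variable {V : Type*} (G : SimpleGraph V) (S : Set V)

lemma addVertexJoinedTo_adj_some_some (u v : V) :
    (addVertexJoinedTo G S).Adj (some u) (some v) ↔ G.Adj u v := by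
  simp only [addVertexJoinedTo, SimpleGraph.fromRel_adj, ne_eq, Option.some.injEq,
    exists_and_left, exists_eq_left', reduceCtorEq, false_and, or_false, and_false,
    false_or]
  constructor
  · rintro ⟨hne, h | h⟩
    · exact h
    · exact h.symm
  · exact fun h => ⟨h.ne, Or.inl h⟩

lemma addVertexJoinedTo_adj_none_some (v : V) :
    (addVertexJoinedTo G S).Adj none (some v) ↔ v ∈ S := by
  simp [addVertexJoinedTo, SimpleGraph.fromRel_adj]

lemma addVertexJoinedTo_adj_some_none (v : V) :
    (addVertexJoinedTo G S).Adj (some v) none ↔ v ∈ S := by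
  rw [SimpleGraph.adj_comm]
  exact addVertexJoinedTo_adj_none_some G S v

open Matrix Polynomial in
lemma charpoly_conj_invol {n R : Type*} [Fintype n] [DecidableEq n] [CommRing R]
    (Q A B : Matrix n n R) (hQ : Q * Q = 1) (h : Q * A = B * Q) :
    A.charpoly = B.charpoly := by
  have hB : B = Q * A * Q := by
    calc B = B * (Q * Q) := by rw [hQ, mul_one]
    _ = (B * Q) * Q := by rw [mul_assoc]
    _ = Q * A * Q := by rw [← h]
  set Q' := (C : R →+* R[X]).mapMatrix Q with hQ'def
  have hQ' : Q' * Q' = 1 := by rw [hQ'def, ← _root_.map_mul, hQ, _root_.map_one]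
  have hscalar : Q' * Matrix.scalar n (X : R[X]) = Matrix.scalar n (X : R[X]) * Q' :=
    (Matrix.scalar_commute (X : R[X]) (fun r' => Commute.all _ _) Q').symm
  have hmap3 : (C : R →+* R[X]).mapMatrix (Q * A * Q)
      = Q' * (C : R →+* R[X]).mapMatrix A * Q' := by
    rw [hQ'def, _root_.map_mul, _root_.map_mul]
  have hcm : charmatrix B = Q' * charmatrix A * Q' := by
    rw [hB]
    unfold charmatrix
    rw [hmap3, mul_sub, sub_mul, hscalar, mul_assoc _ Q' Q', hQ', mul_one]
  unfold Matrix.charpoly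
  rw [hcm, det_mul, det_mul, mul_comm, ← mul_assoc, ← det_mul, hQ', det_one, one_mul]

end Aux

open scoped Classical in
/-- Theorem (Godsil–McKay switching, as used for isospectral graphs): if `Γ` is a `k`-regular
graph on `2m` vertices and its vertex set is split into two halves `V'` and `V'ᶜ` of size `m`
each, then the graphs obtained by adding one new vertex joined to `V'`, respectively to
`V'ᶜ`, are isospectral: their adjacency matrices have the same characteristic polynomial. -/
theorem isospectral_addVertex_halves
    {V : Type*} [Fintype V] [DecidableEq V] (m k : ℕ)
    (G : SimpleGraph V) [DecidableRel G.Adj]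
    (hcard : Fintype.card V = 2 * m)
    (hreg : G.IsRegularOfDegree k)
    (V' : Finset V) (hV' : V'.card = m) :
    ((addVertexJoinedTo G (V' : Set V)).adjMatrix ℤ).charpoly
      = ((addVertexJoinedTo G ((V'ᶜ : Finset V) : Set V)).adjMatrix ℤ).charpoly := by
  classical
  rcases Nat.eq_zero_or_pos m with hm | hm
  · -- m = 0 : V is empty, both halves are empty
    have : IsEmpty V := Fintype.card_eq_zero_iff.mp (by simp [hcard, hm])
    have h1 : (V' : Set V) = ((V'ᶜ : Finset V) : Set V) := by
      congr 1
      exact Subsingleton.elim _ _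
    rw [h1]
  · have hm0 : (m : ℚ) ≠ 0 := Nat.cast_ne_zero.mpr hm.ne'
    -- reduce to ℚ
    have hinj : Function.Injective (Polynomial.map (Int.castRingHom ℚ)) :=
      Polynomial.map_injective _ Int.cast_injective
    apply hinj
    rw [← Matrix.charpoly_map, ← Matrix.charpoly_map]
    have hmapadj : ∀ (H : SimpleGraph (Option V)) (inst : DecidableRel H.Adj),
        (H.adjMatrix ℤ).map (Int.castRingHom ℚ) = H.adjMatrix ℚ := by
      intro H inst
      ext x y
      simp [Matrix.map_apply, SimpleGraph.adjMatrix_apply, apply_ite]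
    rw [hmapadj _ _, hmapadj _ _]
    set A' := (addVertexJoinedTo G (V' : Set V)).adjMatrix ℚ with hA'
    set A'' := (addVertexJoinedTo G ((V'ᶜ : Finset V) : Set V)).adjMatrix ℚ with hA''
    -- switching matrix
    set Q : Matrix (Option V) (Option V) ℚ := fun x y =>
      Option.casesOn x (Option.casesOn y (1 : ℚ) (fun _ => 0))
        (fun u => Option.casesOn y (0 : ℚ) (fun v => (m : ℚ)⁻¹ - if u = v then 1 else 0))
      with hQdef
    -- entries of A', A''
    have hA'ss : ∀ u v : V, A' (some u) (some v) = if G.Adj u v then 1 else 0 := by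
      intro u v
      simp [hA', SimpleGraph.adjMatrix_apply, addVertexJoinedTo_adj_some_some]
    have hA'ns : ∀ v : V, A' none (some v) = if v ∈ V' then 1 else 0 := by
      intro v
      simp [hA', SimpleGraph.adjMatrix_apply, addVertexJoinedTo_adj_none_some]
    have hA'sn : ∀ v : V, A' (some v) none = if v ∈ V' then 1 else 0 := by
      intro v
      simp [hA', SimpleGraph.adjMatrix_apply, addVertexJoinedTo_adj_some_none]
    have hA'nn : A' none none = 0 := by simp [hA']
    have hA''ss : ∀ u v : V, A'' (some u) (some v) = if G.Adj u v then 1 else 0 := by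
      intro u v
      simp [hA'', SimpleGraph.adjMatrix_apply, addVertexJoinedTo_adj_some_some]
    have hA''ns : ∀ v : V, A'' none (some v) = if v ∉ V' then 1 else 0 := by
      intro v
      simp [hA'', SimpleGraph.adjMatrix_apply, addVertexJoinedTo_adj_none_some]
    have hA''sn : ∀ v : V, A'' (some v) none = if v ∉ V' then 1 else 0 := by
      intro v
      simp [hA'', SimpleGraph.adjMatrix_apply, addVertexJoinedTo_adj_some_none]
    have hA''nn : A'' none none = 0 := by simp [hA'']
    -- basic sums
    have hsumind : ∑ v : V, (if v ∈ V' then (1:ℚ) else 0) = (m : ℚ) := by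
      rw [Finset.sum_boole]
      simp [Finset.filter_mem_eq_inter, hV']
    have hsumindc : ∑ v : V, (if v ∉ V' then (1:ℚ) else 0) = (m : ℚ) := by
      rw [Finset.sum_boole]
      have : Finset.univ.filter (fun v => v ∉ V') = V'ᶜ := by
        ext v; simp
      rw [this]
      have := Finset.card_compl V'
      rw [Finset.card_compl, hcard, hV']
      have : 2 * m - m = m := by omega
      rw [this]
    have hrow : ∀ u : V, ∑ v : V, (if G.Adj u v then (1:ℚ) else 0) = (k : ℚ) := by
      intro u
      rw [Finset.sum_boole]
      rw [← SimpleGraph.neighborFinset_eq_filter, SimpleGraph.card_neighborFinset_eq_degree,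
        hreg u]
    have hcol : ∀ v : V, ∑ u : V, (if G.Adj u v then (1:ℚ) else 0) = (k : ℚ) := by
      intro v
      rw [← hrow v]
      apply Finset.sum_congr rfl
      intro u _
      simp [SimpleGraph.adj_comm]
    have hdL : ∀ (u : V) (f : V → ℚ), (∑ v : V, (if u = v then (1:ℚ) else 0) * f v) = f u := by
      intro u f
      simp
    have hdR : ∀ (w : V) (f : V → ℚ), (∑ v : V, f v * (if v = w then (1:ℚ) else 0)) = f w := by
      intro w f
      simp
    -- Q is an involution
    have hQQ : Q * Q = 1 := by
      ext x y
      rw [Matrix.mul_apply, Fintype.sum_option]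
      match x, y with
      | none, none => simp [hQdef, Matrix.one_apply]
      | none, some w => simp [hQdef, Matrix.one_apply]
      | some u, none => simp [hQdef, Matrix.one_apply]
      | some u, some w =>
        simp only [hQdef]
        have hexp : ∀ v : V, ((m:ℚ)⁻¹ - if u = v then 1 else 0) * ((m:ℚ)⁻¹ - if v = w then 1 else 0)
            = ((m:ℚ)⁻¹ * (m:ℚ)⁻¹ - (m:ℚ)⁻¹ * (if v = w then 1 else 0)
              - (if u = v then 1 else 0) * (m:ℚ)⁻¹)
              + (if u = v then 1 else 0) * (if v = w then 1 else 0) := by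
          intro v; ring
        have h1 : ∑ v : V, (m:ℚ)⁻¹ * (if v = w then 1 else 0) = (m:ℚ)⁻¹ := by
          rw [← Finset.mul_sum]
          simp
        have h2 : ∑ v : V, (if u = v then (1:ℚ) else 0) * (m:ℚ)⁻¹ = (m:ℚ)⁻¹ := by
          rw [← Finset.sum_mul]
          simp
        have h3 : ∑ _v : V, (m:ℚ)⁻¹ * (m:ℚ)⁻¹ = (2 * m : ℚ) * ((m:ℚ)⁻¹ * (m:ℚ)⁻¹) := by
          rw [Finset.sum_const, Finset.card_univ, hcard, nsmul_eq_mul]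
          push_cast
          ring
        rw [Finset.sum_congr rfl (fun v _ => hexp v), Finset.sum_add_distrib,
          Finset.sum_sub_distrib, Finset.sum_sub_distrib, h1, h2, h3,
          hdL u (fun v => if v = w then (1:ℚ) else 0), Matrix.one_apply]
        simp only [Option.some.injEq]
        by_cases h : u = w <;> simp [h] <;> field_simp <;> ring
    have hcomm : Q * A' = A'' * Q := by
      ext x y
      rw [Matrix.mul_apply, Matrix.mul_apply, Fintype.sum_option, Fintype.sum_option]
      match x, y with
      | none, none =>
        simp only [hQdef, one_mul, zero_mul, mul_zero, zero_add, add_zero,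
          Finset.sum_const_zero]
        rw [hA'nn, hA''nn, zero_mul]
      | none, some w =>
        simp only [hQdef, one_mul, zero_mul, mul_zero, zero_add, add_zero,
          Finset.sum_const_zero]
        rw [hA'ns w]
        have hexp : ∀ v : V, A'' none (some v) * ((m:ℚ)⁻¹ - if v = w then 1 else 0)
            = (if v ∉ V' then (1:ℚ) else 0) * (m:ℚ)⁻¹
              - (if v ∉ V' then (1:ℚ) else 0) * (if v = w then 1 else 0) := by
          intro v; rw [hA''ns v]; ring
        rw [Finset.sum_congr rfl (fun v _ => hexp v), Finset.sum_sub_distrib,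
          ← Finset.sum_mul, hsumindc, hdR w (fun v => if v ∉ V' then (1:ℚ) else 0),
          mul_inv_cancel₀ hm0]
        by_cases h : w ∈ V' <;> simp [h]
      | some u, none =>
        simp only [hQdef, one_mul, zero_mul, mul_zero, zero_add, add_zero,
          Finset.sum_const_zero]
        rw [mul_one, hA''sn u]
        have hexp : ∀ v : V, ((m:ℚ)⁻¹ - if u = v then 1 else 0) * A' (some v) none
            = (m:ℚ)⁻¹ * (if v ∈ V' then (1:ℚ) else 0)
              - (if u = v then (1:ℚ) else 0) * (if v ∈ V' then 1 else 0) := by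
          intro v; rw [hA'sn v]; ring
        rw [Finset.sum_congr rfl (fun v _ => hexp v), Finset.sum_sub_distrib,
          ← Finset.mul_sum, hsumind, hdL u (fun v => if v ∈ V' then (1:ℚ) else 0),
          inv_mul_cancel₀ hm0]
        by_cases h : u ∈ V' <;> simp [h]
      | some u, some w =>
        simp only [hQdef, one_mul, zero_mul, mul_zero, zero_add, add_zero,
          Finset.sum_const_zero]
        have h1 : ∀ v : V, ((m:ℚ)⁻¹ - if u = v then 1 else 0) * A' (some v) (some w)
            = (m:ℚ)⁻¹ * (if G.Adj v w then (1:ℚ) else 0)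
              - (if u = v then (1:ℚ) else 0) * (if G.Adj v w then 1 else 0) := by
          intro v; rw [hA'ss v w]; ring
        have h2 : ∀ v : V, A'' (some u) (some v) * ((m:ℚ)⁻¹ - if v = w then 1 else 0)
            = (if G.Adj u v then (1:ℚ) else 0) * (m:ℚ)⁻¹
              - (if G.Adj u v then (1:ℚ) else 0) * (if v = w then 1 else 0) := by
          intro v; rw [hA''ss u v]; ring
        rw [Finset.sum_congr rfl (fun v _ => h1 v), Finset.sum_congr rfl (fun v _ => h2 v),
          Finset.sum_sub_distrib, Finset.sum_sub_distrib, ← Finset.mul_sum, ← Finset.sum_mul,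
          hcol w, hrow u, hdL u (fun v => if G.Adj v w then (1:ℚ) else 0),
          hdR w (fun v => if G.Adj u v then (1:ℚ) else 0)]
        ring
    exact charpoly_conj_invol Q A' A'' hQQ hcomm
end

section
/- Let A be a real symmetric n×n matrix whose n eigenvalues are pairwise distinct. Then: (i) every real orthogonal n×n matrix P with P·A = A·P satisfies P² = 1; and (ii) any two real orthogonal n×n matrices commuting with A commute with each other. (Consequently, for a finite graph whose adjacency matrix has simple spectrum, the automorphism group is an elementary abelian 2-group; this is the classical core of the proof that such a graph has quantum automorphism group of the form (ℤ/2)^d.) -/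
/-!
Conjugating by an orthonormal eigenbasis of `A` turns `A` into the diagonal matrix of its
eigenvalues. Since these are distinct, every matrix commuting with it is diagonal, so the
conjugates of orthogonal matrices commuting with `A` are diagonal with entries `±1`: they are
involutions and they commute with each other.
-/

open Function Matrix Unitary

namespace Matrix

variable {n α : Type*} [Fintype n] [DecidableEq n]

theorem isDiag_of_commute_diagonal [CommRing α] [NoZeroDivisors α] {d : n → α}
    (hd : Injective d) {B : Matrix n n α} (h : Commute B (diagonal d)) : B.IsDiag := by
  intro i j hij
  have hij_entry := congr_fun₂ h.eq i j
  rw [mul_diagonal, diagonal_mul] at hij_entry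
  have hprod : (d j - d i) * B i j = 0 := by linear_combination hij_entry
  exact (mul_eq_zero.1 hprod).resolve_left (sub_ne_zero.2 (hd.ne hij.symm))

theorem IsDiag.commute [CommSemiring α] {A B : Matrix n n α} (hA : A.IsDiag) (hB : B.IsDiag) :
    Commute A B := by
  rw [← hA.diagonal_diag, ← hB.diagonal_diag]
  exact commute_diagonal _ _

theorem IsDiag.mul_self_eq_one_of_star_mul_self [Semiring α] [StarRing α] [TrivialStar α]
    {D : Matrix n n α} (hD : D.IsDiag) (h : star D * D = 1) : D * D = 1 := by
  rwa [star_eq_conjTranspose, conjTranspose_eq_transpose_of_trivial, hD.isSymm.eq] at h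

end Matrix

theorem orthogonal_commuting_with_simple_spectrum_symmetric_general
    (n : ℕ) (A : Matrix (Fin n) (Fin n) ℝ)
    (hA : A.IsHermitian)
    (hsimple : Function.Injective hA.eigenvalues) :
    (∀ P : Matrix (Fin n) (Fin n) ℝ, Pᵀ * P = 1 → P * A = A * P → P ^ 2 = 1) ∧
    (∀ P Q : Matrix (Fin n) (Fin n) ℝ, Pᵀ * P = 1 → Qᵀ * Q = 1 →
      P * A = A * P → Q * A = A * Q → P * Q = Q * P) := by
  set e := conjStarAlgAut ℝ _ (star hA.eigenvectorUnitary)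
  have heA : e A = diagonal hA.eigenvalues := by
    simpa [e] using hA.conjStarAlgAut_star_eigenvectorUnitary
  have hdiag (P : Matrix (Fin n) (Fin n) ℝ) (hPA : P * A = A * P) : (e P).IsDiag :=
    isDiag_of_commute_diagonal hsimple (heA ▸ Commute.map (f := e) hPA)
  refine ⟨fun P hP hPA => e.injective ?_, fun P Q _ _ hPA hQA => e.injective ?_⟩
  · have horth : star (e P) * e P = 1 := by
      rw [← map_star, ← map_mul, star_eq_conjTranspose, conjTranspose_eq_transpose_of_trivial,
        hP, map_one]
    rw [map_pow, map_one, sq]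
    exact (hdiag P hPA).mul_self_eq_one_of_star_mul_self horth
  · rw [map_mul, map_mul]
    exact ((hdiag P hPA).commute (hdiag Q hQA)).eq

/-- If a real symmetric matrix `A` has pairwise distinct eigenvalues, then every real
orthogonal matrix commuting with `A` is an involution, and any two real orthogonal
matrices commuting with `A` commute with each other. -/
theorem orthogonal_commuting_with_simple_spectrum_symmetric
    (n : ℕ) (A : Matrix (Fin n) (Fin n) ℝ)
    (hsymm : Aᵀ = A) (hA : A.IsHermitian)
    (hsimple : Function.Injective hA.eigenvalues) :
    (∀ P : Matrix (Fin n) (Fin n) ℝ, Pᵀ * P = 1 → P * A = A * P → P ^ 2 = 1) ∧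
    (∀ P Q : Matrix (Fin n) (Fin n) ℝ, Pᵀ * P = 1 → Qᵀ * Q = 1 →
      P * A = A * P → Q * A = A * Q → P * Q = Q * P) :=
  orthogonal_commuting_with_simple_spectrum_symmetric_general n A hA hsimple
end

section
/- Let A : Mₙ(ℂ) → Mₙ(ℂ) be a ℂ-linear map, let e_{ij} denote the standard matrix units, and define P := (1/n)·∑_{i,j=1}^{n} A(e_{ij}) ⊗ (e_{ji})ᵒᵖ ∈ Mₙ(ℂ) ⊗_ℂ Mₙ(ℂ)ᵒᵖ. Then P·P = P (P is idempotent in the tensor product algebra) if and only if for all indices i, l: (1/n)·∑_{j=1}^{n} A(e_{ij})·A(e_{jl}) = A(e_{il}). (The latter condition is exactly the quantum Schur idempotent condition m(A ⊗ A)m* = A defining a quantum adjacency matrix, where m is multiplication and m* its adjoint with respect to the inner product induced by τ = n·Tr.) -/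
/-!
The assignment `B ↦ ∑ i j, B i j ⊗ (e_{ji})ᵒᵖ` is an algebra isomorphism
`Mₙ(R) ≃ R ⊗ Mₙ(ℂ)ᵒᵖ` for any algebra `R` (matrix units compose like the entries of a matrix
product, and transposition turns `Mₙ(ℂ)` into `Mₙ(ℂ)ᵒᵖ`). Taking `R = Mₙ(ℂ)`, the element `P` is
the image of the block matrix `n⁻¹ • (A(e_{ij}))_{ij}`, so `P² = P` is the idempotence of that
block matrix, which entrywise is the Schur idempotent condition.
-/

open scoped TensorProduct
open Matrix

section MatrixEquivTensorMop

variable (R A ι : Type*) [CommSemiring R] [Semiring A] [Algebra R A] [Fintype ι] [DecidableEq ι]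

def matrixEquivTensorMop : Matrix ι ι A ≃ₐ[R] A ⊗[R] (Matrix ι ι R)ᵐᵒᵖ :=
  (matrixEquivTensor ι R A).trans
    (Algebra.TensorProduct.congr AlgEquiv.refl (transposeAlgEquiv ι R R))

variable {R A ι}

theorem matrixEquivTensorMop_apply (M : Matrix ι ι A) :
    matrixEquivTensorMop R A ι M =
      ∑ i, ∑ j, M i j ⊗ₜ MulOpposite.op (single j i (1 : R)) := by
  simp [matrixEquivTensorMop, Fintype.sum_prod_type]

end MatrixEquivTensorMop

theorem smul_mul_smul_self_eq_iff {K M : Type*} [DivisionRing K] [Semiring M] [Module K M]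
    [IsScalarTower K M M] [SMulCommClass K M M] {c : K} (hc : c ≠ 0) (x : M) :
    (c • x) * (c • x) = c • x ↔ c • (x * x) = x := by
  rw [smul_mul_smul_comm, mul_smul, smul_right_inj hc]

/-- The Choi-type element `P = (1/n) ∑_{i,j} A(e_{ij}) ⊗ (e_{ji})ᵒᵖ` is idempotent in
`Mₙ(ℂ) ⊗ Mₙ(ℂ)ᵒᵖ` iff `A` satisfies the quantum Schur idempotent condition
`(1/n) ∑_j A(e_{ij}) A(e_{jl}) = A(e_{il})` for all `i, l`. -/
theorem choi_idempotent_iff_schur_idempotent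
    (n : ℕ) (A : Matrix (Fin n) (Fin n) ℂ →ₗ[ℂ] Matrix (Fin n) (Fin n) ℂ) :
    (let P : Matrix (Fin n) (Fin n) ℂ ⊗[ℂ] (Matrix (Fin n) (Fin n) ℂ)ᵐᵒᵖ :=
      (n : ℂ)⁻¹ • ∑ i, ∑ j,
        A (Matrix.single i j 1) ⊗ₜ[ℂ] MulOpposite.op (Matrix.single j i 1)
     P * P = P) ↔
    (∀ i l : Fin n,
      (n : ℂ)⁻¹ • ∑ j, A (Matrix.single i j 1) * A (Matrix.single j l 1)
        = A (Matrix.single i l 1)) := by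
  rcases eq_or_ne n 0 with rfl | hn
  · simp
  have hc : (n : ℂ)⁻¹ ≠ 0 := inv_ne_zero (Nat.cast_ne_zero.mpr hn)
  set B : Matrix (Fin n) (Fin n) (Matrix (Fin n) (Fin n) ℂ) := of fun i j => A (single i j 1)
  have hP : (n : ℂ)⁻¹ • ∑ i, ∑ j, A (single i j 1) ⊗ₜ[ℂ] MulOpposite.op (single j i 1) =
      matrixEquivTensorMop ℂ _ (Fin n) ((n : ℂ)⁻¹ • B) := by
    rw [map_smul, matrixEquivTensorMop_apply]
    rfl
  dsimp only
  rw [hP, ← map_mul, (AlgEquiv.injective _).eq_iff, smul_mul_smul_self_eq_iff hc,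
    ← Matrix.ext_iff]
  rfl
end

section
/- Let V ⊆ Mₙ(ℂ) be a complex linear subspace with an orthonormal basis (A₁, …, A_m) with respect to the Frobenius inner product ⟨a,b⟩ = Tr(aᴴ b). Then: (i) V is self-adjoint (V = V* := {xᴴ : x ∈ V}) if and only if for all x, y ∈ Mₙ(ℂ): Tr((∑ᵢ Aᵢ x Aᵢᴴ)·y) = Tr(x·(∑ᵢ Aᵢ y Aᵢᴴ)); and (ii) the identity matrix 1 belongs to V if and only if ∑ᵢ Tr(Aᵢᴴ)·Aᵢ = 1. (These express, in terms of the quantum adjacency matrix A(x) = n·∑ᵢ Aᵢ x Aᵢᴴ, that the quantum graph V is symmetric iff A is self-adjoint with respect to the trace form, and reflexive iff m(A ⊗ Id)m*(1) = 1.) -/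
open Matrix

section aux

private lemma qa_trace_nondeg {n : ℕ} (z : Matrix (Fin n) (Fin n) ℂ)
    (h : ∀ y, (z * y).trace = 0) : z = 0 := by
  have h0 : (z * zᴴ).trace = 0 := h zᴴ
  have hsum : ∑ i : Fin n, ∑ j : Fin n, Complex.normSq (z i j) = 0 := by
    have := congrArg Complex.re h0
    simpa [Matrix.trace, Matrix.mul_apply, Matrix.diag, Matrix.conjTranspose_apply,
      Complex.mul_conj, Complex.ext_iff] using this
  ext i j
  have hij : Complex.normSq (z i j) = 0 := by
    have h1 := (Finset.sum_eq_zero_iff_of_nonneg (fun i _ => Finset.sum_nonneg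
      (fun j _ => Complex.normSq_nonneg (z i j)))).mp hsum i (Finset.mem_univ i)
    exact (Finset.sum_eq_zero_iff_of_nonneg (fun j _ => Complex.normSq_nonneg (z i j))).mp h1 j
      (Finset.mem_univ j)
  simpa using Complex.normSq_eq_zero.mp hij

private lemma qa_proj_fix {n m : ℕ} (A : Fin m → Matrix (Fin n) (Fin n) ℂ)
    (horth : ∀ i j, ((A i)ᴴ * A j).trace = if i = j then 1 else 0)
    {x : Matrix (Fin n) (Fin n) ℂ} (hx : x ∈ Submodule.span ℂ (Set.range A)) :
    ∑ i, ((A i)ᴴ * x).trace • A i = x := by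
  induction hx using Submodule.span_induction with
  | mem y hy =>
    obtain ⟨j, rfl⟩ := hy
    simp only [horth]
    simp [Finset.sum_ite_eq', Finset.mem_univ]
  | zero => simp
  | add y z _ _ hy hz =>
    simp only [mul_add, Matrix.trace_add, add_smul, Finset.sum_add_distrib, hy, hz]
  | smul c y _ hy =>
    conv_rhs => rw [← hy]
    rw [Finset.smul_sum]
    simp only [Matrix.mul_smul, Matrix.trace_smul, smul_smul, smul_eq_mul]

private lemma qa_scalarK {n m : ℕ} (A : Fin m → Matrix (Fin n) (Fin n) ℂ)
    (K : ∀ x, ∑ i, A i * x * (A i)ᴴ = ∑ i, (A i)ᴴ * x * A i)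
    (a b c d : Fin n) :
    ∑ i, A i a c * star (A i b d) = ∑ i, star (A i c a) * A i d b := by
  have h := K (Matrix.of fun p q => if p = c ∧ q = d then (1:ℂ) else 0)
  have h2 : (∑ i, A i * (Matrix.of fun p q => if p = c ∧ q = d then (1:ℂ) else 0) * (A i)ᴴ) a b
      = (∑ i, (A i)ᴴ * (Matrix.of fun p q => if p = c ∧ q = d then (1:ℂ) else 0) * A i) a b := by
    rw [h]
  simpa [Matrix.sum_apply, Matrix.mul_apply, Matrix.conjTranspose_apply, ite_and,
    Finset.mul_sum, Finset.sum_mul, mul_comm, mul_left_comm] using h2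

private lemma qa_keylem {n m : ℕ} (A : Fin m → Matrix (Fin n) (Fin n) ℂ)
    (horth : ∀ i j, ((A i)ᴴ * A j).trace = if i = j then 1 else 0)
    (K : ∀ x, ∑ i, A i * x * (A i)ᴴ = ∑ i, (A i)ᴴ * x * A i) (j : Fin m) :
    ∑ i, ((A i)ᴴ * (A j)ᴴ).trace • A i = (A j)ᴴ := by
  ext a b
  rw [Matrix.sum_apply]
  have step1 : ∀ i, (((A i)ᴴ * (A j)ᴴ).trace • A i) a b
      = ∑ c, ∑ d, star (A j c d) * (A i a b * star (A i d c)) := by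
    intro i
    simp only [Matrix.smul_apply, Matrix.trace, Matrix.diag, Matrix.mul_apply,
      Matrix.conjTranspose_apply, smul_eq_mul, Finset.sum_mul, Finset.mul_sum]
    apply Finset.sum_congr rfl; intro c _
    apply Finset.sum_congr rfl; intro d _
    ring
  simp only [step1]
  rw [Finset.sum_comm]
  have step2 : ∀ c, ∑ i, ∑ d, star (A j c d) * (A i a b * star (A i d c))
      = ∑ d, star (A j c d) * (∑ i, A i a b * star (A i d c)) := by
    intro c
    rw [Finset.sum_comm]
    simp only [Finset.mul_sum]
  simp only [step2,
    show ∀ d c, (∑ i, A i a b * star (A i d c)) = ∑ i, star (A i b a) * A i c d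
      from fun d c => qa_scalarK A K a d b c]
  have step3 : ∀ c, ∑ d, star (A j c d) * ∑ i, star (A i b a) * A i c d
      = ∑ i, star (A i b a) * ∑ d, star (A j c d) * A i c d := by
    intro c
    simp only [Finset.mul_sum]
    rw [Finset.sum_comm]
    apply Finset.sum_congr rfl; intro i _
    apply Finset.sum_congr rfl; intro d _
    ring
  simp only [step3]
  rw [Finset.sum_comm]
  have step4 : ∀ i, ∑ c, star (A i b a) * ∑ d, star (A j c d) * A i c d
      = star (A i b a) * ((A j)ᴴ * A i).trace := by
    intro i
    rw [← Finset.mul_sum]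
    congr 1
    simp only [Matrix.trace, Matrix.diag, Matrix.mul_apply, Matrix.conjTranspose_apply]
    rw [Finset.sum_comm]
  simp only [step4, horth]
  simp [Finset.sum_ite_eq', Finset.mem_univ]

end aux

/-- For a subspace `V ⊆ Mₙ(ℂ)` with Frobenius-orthonormal basis `(Aᵢ)`:
(i) `V` is self-adjoint iff the quantum adjacency matrix is self-adjoint for the trace form,
i.e. `Tr((∑ᵢ Aᵢ x Aᵢᴴ) y) = Tr(x (∑ᵢ Aᵢ y Aᵢᴴ))` for all `x, y`; and
(ii) `1 ∈ V` iff `∑ᵢ Tr(Aᵢᴴ) • Aᵢ = 1`. -/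
theorem selfadjoint_and_reflexive_via_adjacency
    (n m : ℕ) (V : Submodule ℂ (Matrix (Fin n) (Fin n) ℂ))
    (A : Fin m → Matrix (Fin n) (Fin n) ℂ)
    (hmem : ∀ i, A i ∈ V)
    (hspan : V ≤ Submodule.span ℂ (Set.range A))
    (horth : ∀ i j, ((A i)ᴴ * A j).trace = if i = j then 1 else 0) :
    (((fun x : Matrix (Fin n) (Fin n) ℂ => xᴴ) '' (V : Set (Matrix (Fin n) (Fin n) ℂ))
        = (V : Set (Matrix (Fin n) (Fin n) ℂ))) ↔
      ∀ x y : Matrix (Fin n) (Fin n) ℂ,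
        ((∑ i, A i * x * (A i)ᴴ) * y).trace = (x * ∑ i, A i * y * (A i)ᴴ).trace) ∧
    ((1 : Matrix (Fin n) (Fin n) ℂ) ∈ V ↔
      ∑ i, ((A i)ᴴ).trace • A i = (1 : Matrix (Fin n) (Fin n) ℂ)) := by
  have hP : ∀ x ∈ V, ∑ i, ((A i)ᴴ * x).trace • A i = x :=
    fun x hx => qa_proj_fix A horth (hspan hx)
  -- cyclic trace identity used on both sides
  have hcyc : ∀ (x y : Matrix (Fin n) (Fin n) ℂ) i,
      (x * (A i * y * (A i)ᴴ)).trace = ((A i)ᴴ * x * A i * y).trace := by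
    intro x y i
    have e1 : x * (A i * y * (A i)ᴴ) = (x * (A i * y)) * (A i)ᴴ := by noncomm_ring
    have e2 : (A i)ᴴ * x * A i * y = (A i)ᴴ * (x * (A i * y)) := by noncomm_ring
    rw [e1, e2, Matrix.trace_mul_comm]
  -- the trace condition is equivalent to K
  have hsum : ∀ x y : Matrix (Fin n) (Fin n) ℂ,
      (x * ∑ i, A i * y * (A i)ᴴ).trace = ((∑ i, (A i)ᴴ * x * A i) * y).trace := by
    intro x y
    rw [Finset.mul_sum, Matrix.trace_sum, Finset.sum_mul, Matrix.trace_sum]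
    exact Finset.sum_congr rfl fun i _ => hcyc x y i
  constructor
  · constructor
    · -- selfadjoint → trace condition
      intro h x y
      have hAs : ∀ i, (A i)ᴴ ∈ V := by
        intro i
        have hmem' : (A i)ᴴ ∈ ((fun x : Matrix (Fin n) (Fin n) ℂ => xᴴ) ''
            (V : Set (Matrix (Fin n) (Fin n) ℂ))) := ⟨A i, hmem i, rfl⟩
        rw [h] at hmem'
        exact hmem'
      have hrep : ∀ j, (A j)ᴴ = ∑ i, ((A i)ᴴ * (A j)ᴴ).trace • A i :=
        fun j => (hP _ (hAs j)).symm
      have K : ∀ z : Matrix (Fin n) (Fin n) ℂ,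
          ∑ i, A i * z * (A i)ᴴ = ∑ i, (A i)ᴴ * z * A i := by
        intro z
        have L : ∑ j, A j * z * (A j)ᴴ
            = ∑ j, ∑ i, ((A i)ᴴ * (A j)ᴴ).trace • (A j * z * A i) := by
          apply Finset.sum_congr rfl; intro j _
          conv_lhs => rw [hrep j]
          rw [Finset.mul_sum]
          simp only [Matrix.mul_smul]
        have R : ∑ j, (A j)ᴴ * z * A j
            = ∑ j, ∑ i, ((A i)ᴴ * (A j)ᴴ).trace • (A i * z * A j) := by
          apply Finset.sum_congr rfl; intro j _
          conv_lhs => rw [hrep j]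
          rw [Finset.sum_mul, Finset.sum_mul]
          simp only [Matrix.smul_mul]
        rw [L, R]
        conv_rhs => rw [Finset.sum_comm]
        apply Finset.sum_congr rfl; intro j _
        apply Finset.sum_congr rfl; intro i _
        rw [Matrix.trace_mul_comm]
      rw [hsum x y, K x]
    · -- trace condition → selfadjoint
      intro h
      have K : ∀ z : Matrix (Fin n) (Fin n) ℂ,
          ∑ i, A i * z * (A i)ᴴ = ∑ i, (A i)ᴴ * z * A i := by
        intro z
        have hz : ∀ y, (((∑ i, A i * z * (A i)ᴴ) - ∑ i, (A i)ᴴ * z * A i) * y).trace = 0 := by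
          intro y
          rw [Matrix.sub_mul, Matrix.trace_sub, h z y, hsum z y, sub_self]
        have := qa_trace_nondeg _ hz
        exact sub_eq_zero.mp this
      have hAs : ∀ j, (A j)ᴴ ∈ V := by
        intro j
        rw [← qa_keylem A horth K j]
        exact Submodule.sum_mem _ fun i _ => Submodule.smul_mem _ _ (hmem i)
      have hadj : ∀ x ∈ V, xᴴ ∈ V := by
        intro x hx
        have hx' := hspan hx
        clear hx
        induction hx' using Submodule.span_induction with
        | mem y hy => obtain ⟨j, rfl⟩ := hy; exact hAs j
        | zero => simp only [Matrix.conjTranspose_zero]; exact V.zero_mem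
        | add y z _ _ hy hz => rw [Matrix.conjTranspose_add]; exact V.add_mem hy hz
        | smul c y _ hy => rw [Matrix.conjTranspose_smul]; exact V.smul_mem _ hy
      ext x
      constructor
      · rintro ⟨y, hy, rfl⟩
        exact hadj y hy
      · intro hx
        exact ⟨xᴴ, hadj x hx, by simp⟩
  · constructor
    · intro h1
      have := hP 1 h1
      simpa using this
    · intro h
      rw [← h]
      exact Submodule.sum_mem _ fun i _ => Submodule.smul_mem _ _ (hmem i)
end
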